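/- arXiv:2406.03864 — 6 statements merged into one kernel-verified Lean document; each statement's English description precedes it below -/
import Mathlib

section
/- (Lemma 5.6, ITE–pair gap decomposition) Assume all the integrals below are finite and Fubini's theorem applies to the double integrals. Then ε_ITE − ε_pair = u_0 · ∫ r_1(x)² (p_0(x) − q_0(x)) dx + u_1 · ∫ r_0(x)² (p_1(x) − q_1(x)) dx + 2·u_1 · ∫ r_1(x) g_{01}(x) p_1(x) dx + 2·u_0 · ∫ r_0(x) g_{10}(x) p_0(x) dx. -/
open MeasureTheory

noncomputable section

/-- Covariate space: `ℝ^d` with the Euclidean norm and Lebesgue measure. -/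
abbrev Euc (d : ℕ) := EuclideanSpace ℝ (Fin d)

/-- A nonneg-valued real function with integral 1 is integrable. -/
lemma aux_integrable_of_integral_eq_one {α : Type*} [MeasurableSpace α] {μ : Measure α}
    {f : α → ℝ} (h : (∫ x, f x ∂μ) = 1) : Integrable f μ := by
  by_contra h'
  rw [integral_undef h'] at h
  norm_num at h

/-- Product integrability of `a(x) * q(x,x')` for integrable nonneg `a` and a
conditional density `q`. -/
lemma aux_prod_int {d : ℕ} {a : Euc d → ℝ} {q : Euc d → Euc d → ℝ}
    (ham : Measurable a) (ha0 : ∀ x, 0 ≤ a x) (hai : Integrable a)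
    (hqm : Measurable fun z : Euc d × Euc d => q z.1 z.2) (hq0 : ∀ x x', 0 ≤ q x x')
    (hq1 : ∀ x, (∫ x', q x x') = 1) :
    Integrable (fun z : Euc d × Euc d => a z.1 * q z.1 z.2)
      ((volume : Measure (Euc d)).prod volume) := by
  have hqi : ∀ x, Integrable (q x) := fun x => aux_integrable_of_integral_eq_one (hq1 x)
  refine (integrable_prod_iff ?_).2 ⟨?_, ?_⟩
  · exact ((ham.comp measurable_fst).mul hqm).aestronglyMeasurable
  · exact Filter.Eventually.of_forall fun x => (hqi x).const_mul (a x)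
  · refine hai.congr (Filter.Eventually.of_forall fun x => ?_)
    show a x = ∫ x', ‖a x * q x x'‖
    have h1 : (fun x' => ‖a x * q x x'‖) = fun x' => a x * q x x' :=
      funext fun x' => by
        rw [Real.norm_eq_abs, abs_of_nonneg (mul_nonneg (ha0 x) (hq0 x x'))]
    rw [h1, integral_const_mul, hq1 x, mul_one]

/-- The gap-function cross term identity. -/
lemma aux_G {d : ℕ} {p r s : Euc d → ℝ} {q : Euc d → Euc d → ℝ}
    (hq1 : ∀ x, (∫ x', q x x') = 1)
    (hcross : Integrable (fun z : Euc d × Euc d => s z.2 * r z.1 * q z.1 z.2 * p z.1)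
      ((volume : Measure (Euc d)).prod volume))
    (hrsp : Integrable (fun x => r x * s x * p x)) :
    (∫ x, r x * (∫ x', (s x' - s x) * q x x') * p x)
      = (∫ z : Euc d × Euc d, s z.2 * r z.1 * q z.1 z.2 * p z.1
          ∂((volume : Measure (Euc d)).prod volume)) - ∫ x, r x * s x * p x := by
  have hqi : ∀ x, Integrable (q x) := fun x => aux_integrable_of_integral_eq_one (hq1 x)
  have key : ∀ᵐ x : Euc d, r x * (∫ x', (s x' - s x) * q x x') * p x
      = (∫ x', s x' * r x * q x x' * p x) - r x * s x * p x := by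
    filter_upwards [hcross.prod_right_ae] with x hx
    by_cases hc : r x * p x = 0
    · have h1 : (fun x' => s x' * r x * q x x' * p x) = fun _ => (0 : ℝ) := by
        funext x'
        rcases mul_eq_zero.1 hc with h | h <;> rw [h] <;> ring
      rw [h1, integral_zero]
      rcases mul_eq_zero.1 hc with h | h <;> rw [h] <;> ring
    · obtain ⟨hr, hp⟩ := mul_ne_zero_iff.1 hc
      have h1 : Integrable (fun x' => s x' * q x x') := by
        refine (hx.mul_const (r x * p x)⁻¹).congr
          (Filter.Eventually.of_forall fun x' => ?_)
        field_simp
      have h2 : (∫ x', (s x' - s x) * q x x')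
          = (∫ x', s x' * q x x') - s x := by
        have e : (fun x' => (s x' - s x) * q x x')
            = fun x' => s x' * q x x' - s x * q x x' := funext fun x' => by ring
        rw [e, integral_sub h1 ((hqi x).const_mul (s x)), integral_const_mul, hq1 x,
          mul_one]
      have h3 : (∫ x', s x' * r x * q x x' * p x)
          = (∫ x', s x' * q x x') * (r x * p x) := by
        have e : (fun x' => s x' * r x * q x x' * p x)
            = fun x' => (s x' * q x x') * (r x * p x) := funext fun x' => by ring
        rw [e, integral_mul_const]
      rw [h2, h3]; ring
  rw [integral_congr_ae key,
    integral_sub hcross.integral_prod_left hrsp]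
  congr 1
  exact integral_integral
    (f := fun x x' => s x' * r x * q x x' * p x) hcross

/-- **Lemma 5.6 (ITE–pair gap decomposition).**
`ε_ITE − ε_pair = u₀ ∫ r₁² (p₀ − q₀) + u₁ ∫ r₀² (p₁ − q₁)
  + 2 u₁ ∫ r₁ g₀₁ p₁ + 2 u₀ ∫ r₀ g₁₀ p₀`,
where `q_t(x') = ∫ q_t(x'|x) p_t(x) dx` is the neighbor marginal,
`g₀₁(x) = ∫ (r₀(x') − r₀(x)) q₁(x'|x) dx'` and
`g₁₀(x) = ∫ (r₁(x') − r₁(x)) q₀(x'|x) dx'`.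
Here `q₀ x x'` denotes the conditional density `q₀(x'|x)`. -/
theorem ite_pair_gap_decomposition {d : ℕ}
    (p₀ p₁ r₀ r₁ : Euc d → ℝ) (q₀ q₁ : Euc d → Euc d → ℝ) (u₀ u₁ : ℝ)
    -- densities
    (hp₀m : Measurable p₀) (hp₁m : Measurable p₁)
    (hp₀0 : ∀ x, 0 ≤ p₀ x) (hp₁0 : ∀ x, 0 ≤ p₁ x)
    (hp₀1 : (∫ x, p₀ x) = 1) (hp₁1 : (∫ x, p₁ x) = 1)
    -- treatment marginals
    (hu₀ : 0 ≤ u₀) (hu₁ : 0 ≤ u₁) (hu : u₀ + u₁ = 1)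
    -- residuals
    (hr₀m : Measurable r₀) (hr₁m : Measurable r₁)
    -- neighborhood conditional densities
    (hq₀m : Measurable (fun z : Euc d × Euc d => q₀ z.1 z.2))
    (hq₁m : Measurable (fun z : Euc d × Euc d => q₁ z.1 z.2))
    (hq₀0 : ∀ x x', 0 ≤ q₀ x x') (hq₁0 : ∀ x x', 0 ≤ q₁ x x')
    (hq₀1 : ∀ x, (∫ x', q₀ x x') = 1) (hq₁1 : ∀ x, (∫ x', q₁ x x') = 1)
    -- all integrals are finite and Fubini applies to the double integrals
    (hITE : Integrable (fun x => (r₁ x - r₀ x) ^ 2 * (u₀ * p₀ x + u₁ * p₁ x)))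
    (hpair₀ : Integrable (fun z : Euc d × Euc d =>
      (r₀ z.1 - r₁ z.2) ^ 2 * q₀ z.1 z.2 * p₀ z.1))
    (hpair₁ : Integrable (fun z : Euc d × Euc d =>
      (r₁ z.1 - r₀ z.2) ^ 2 * q₁ z.1 z.2 * p₁ z.1))
    (hcross₀ : Integrable (fun z : Euc d × Euc d =>
      r₁ z.2 * r₀ z.1 * q₀ z.1 z.2 * p₀ z.1))
    (hcross₁ : Integrable (fun z : Euc d × Euc d =>
      r₁ z.1 * r₀ z.2 * q₁ z.1 z.2 * p₁ z.1))
    (hmarg₀ : Integrable (fun z : Euc d × Euc d =>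
      r₁ z.2 ^ 2 * q₀ z.1 z.2 * p₀ z.1))
    (hmarg₁ : Integrable (fun z : Euc d × Euc d =>
      r₀ z.2 ^ 2 * q₁ z.1 z.2 * p₁ z.1))
    (hr₀p₀ : Integrable (fun x => r₀ x ^ 2 * p₀ x))
    (hr₁p₁ : Integrable (fun x => r₁ x ^ 2 * p₁ x))
    (hr₁p₀ : Integrable (fun x => r₁ x ^ 2 * p₀ x))
    (hr₀p₁ : Integrable (fun x => r₀ x ^ 2 * p₁ x))
    (hr₁Q₀ : Integrable (fun x => r₁ x ^ 2 * (∫ y, q₀ y x * p₀ y)))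
    (hr₀Q₁ : Integrable (fun x => r₀ x ^ 2 * (∫ y, q₁ y x * p₁ y)))
    (hg₀₁ : Integrable (fun x => r₁ x * (∫ x', (r₀ x' - r₀ x) * q₁ x x') * p₁ x))
    (hg₁₀ : Integrable (fun x => r₀ x * (∫ x', (r₁ x' - r₁ x) * q₀ x x') * p₀ x)) :
    (∫ x, (r₁ x - r₀ x) ^ 2 * (u₀ * p₀ x + u₁ * p₁ x)) -
      (u₀ * (∫ x, ∫ x', (r₀ x - r₁ x') ^ 2 * q₀ x x' * p₀ x) +
       u₁ * (∫ x, ∫ x', (r₁ x - r₀ x') ^ 2 * q₁ x x' * p₁ x)) =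
    u₀ * (∫ x, r₁ x ^ 2 * (p₀ x - ∫ y, q₀ y x * p₀ y)) +
    u₁ * (∫ x, r₀ x ^ 2 * (p₁ x - ∫ y, q₁ y x * p₁ y)) +
    2 * u₁ * (∫ x, r₁ x * (∫ x', (r₀ x' - r₀ x) * q₁ x x') * p₁ x) +
    2 * u₀ * (∫ x, r₀ x * (∫ x', (r₁ x' - r₁ x) * q₀ x x') * p₀ x) := by
  rw [Measure.volume_eq_prod] at hpair₀ hpair₁ hcross₀ hcross₁ hmarg₀ hmarg₁
  -- basic integrabilities
  have habs : ∀ (a b c : ℝ), 0 ≤ c → ‖a * b * c‖ ≤ a ^ 2 * c + b ^ 2 * c := by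
    intro a b c hc
    rw [Real.norm_eq_abs, abs_mul, abs_of_nonneg hc, abs_mul]
    have h : |a| * |b| ≤ a ^ 2 + b ^ 2 := by
      nlinarith [sq_nonneg (|a| - |b|), sq_abs a, sq_abs b,
        mul_nonneg (abs_nonneg a) (abs_nonneg b)]
    nlinarith [mul_le_mul_of_nonneg_right h hc]
  have hD₀ : Integrable (fun x => r₀ x * r₁ x * p₀ x) := by
    refine (hr₀p₀.add hr₁p₀).mono'
      ((hr₀m.mul hr₁m).mul hp₀m).aestronglyMeasurable
      (Filter.Eventually.of_forall fun x => habs _ _ _ (hp₀0 x))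
  have hD₁ : Integrable (fun x => r₁ x * r₀ x * p₁ x) := by
    refine (hr₁p₁.add hr₀p₁).mono'
      ((hr₁m.mul hr₀m).mul hp₁m).aestronglyMeasurable
      (Filter.Eventually.of_forall fun x => habs _ _ _ (hp₁0 x))
  have hq₀i : ∀ x, Integrable (q₀ x) := fun x => aux_integrable_of_integral_eq_one (hq₀1 x)
  have hq₁i : ∀ x, Integrable (q₁ x) := fun x => aux_integrable_of_integral_eq_one (hq₁1 x)
  -- product integrability of r t(x)^2 q_t(x,x') p_t(x)
  have hsq₀ : Integrable (fun z : Euc d × Euc d => r₀ z.1 ^ 2 * q₀ z.1 z.2 * p₀ z.1)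
      ((volume : Measure (Euc d)).prod volume) := by
    have := aux_prod_int (a := fun x => r₀ x ^ 2 * p₀ x)
      ((hr₀m.pow_const 2).mul hp₀m) (fun x => mul_nonneg (sq_nonneg _) (hp₀0 x))
      hr₀p₀ hq₀m hq₀0 hq₀1
    exact this.congr (Filter.Eventually.of_forall fun z => by ring)
  have hsq₁ : Integrable (fun z : Euc d × Euc d => r₁ z.1 ^ 2 * q₁ z.1 z.2 * p₁ z.1)
      ((volume : Measure (Euc d)).prod volume) := by
    have := aux_prod_int (a := fun x => r₁ x ^ 2 * p₁ x)
      ((hr₁m.pow_const 2).mul hp₁m) (fun x => mul_nonneg (sq_nonneg _) (hp₁0 x))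
      hr₁p₁ hq₁m hq₁0 hq₁1
    exact this.congr (Filter.Eventually.of_forall fun z => by ring)
  -- abbreviations for the base integrals
  set T1 := ∫ x, r₁ x ^ 2 * p₀ x with hT1
  set T2 := ∫ x, r₀ x * r₁ x * p₀ x with hT2
  set T3 := ∫ x, r₀ x ^ 2 * p₀ x with hT3
  set T4 := ∫ x, r₁ x ^ 2 * p₁ x with hT4
  set T5 := ∫ x, r₁ x * r₀ x * p₁ x with hT5
  set T6 := ∫ x, r₀ x ^ 2 * p₁ x with hT6
  set M₀ := ∫ x, r₁ x ^ 2 * (∫ y, q₀ y x * p₀ y) with hM₀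
  set M₁ := ∫ x, r₀ x ^ 2 * (∫ y, q₁ y x * p₁ y) with hM₁
  set C₀ := ∫ z : Euc d × Euc d, r₁ z.2 * r₀ z.1 * q₀ z.1 z.2 * p₀ z.1
      ∂((volume : Measure (Euc d)).prod volume) with hC₀
  set C₁ := ∫ z : Euc d × Euc d, r₀ z.2 * r₁ z.1 * q₁ z.1 z.2 * p₁ z.1
      ∂((volume : Measure (Euc d)).prod volume) with hC₁
  -- marginal identities: ∫prod marg = M
  have hM₀eq : (∫ z : Euc d × Euc d, r₁ z.2 ^ 2 * q₀ z.1 z.2 * p₀ z.1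
      ∂((volume : Measure (Euc d)).prod volume)) = M₀ := by
    have hpp : (∫ z : Euc d × Euc d, r₁ z.2 ^ 2 * q₀ z.1 z.2 * p₀ z.1
        ∂((volume : Measure (Euc d)).prod volume))
        = ∫ x', ∫ x, r₁ x' ^ 2 * q₀ x x' * p₀ x :=
      ((integral_integral (f := fun x x' => r₁ x' ^ 2 * q₀ x x' * p₀ x) hmarg₀).symm).trans
        (integral_integral_swap (f := fun x x' => r₁ x' ^ 2 * q₀ x x' * p₀ x) hmarg₀)
    rw [hpp, hM₀]
    refine integral_congr_ae (Filter.Eventually.of_forall fun x => ?_)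
    show (∫ y, r₁ x ^ 2 * q₀ y x * p₀ y) = r₁ x ^ 2 * ∫ y, q₀ y x * p₀ y
    have e : (fun y => r₁ x ^ 2 * q₀ y x * p₀ y)
        = fun y => r₁ x ^ 2 * (q₀ y x * p₀ y) := funext fun y => by ring
    rw [e, integral_const_mul]
  have hM₁eq : (∫ z : Euc d × Euc d, r₀ z.2 ^ 2 * q₁ z.1 z.2 * p₁ z.1
      ∂((volume : Measure (Euc d)).prod volume)) = M₁ := by
    have hpp : (∫ z : Euc d × Euc d, r₀ z.2 ^ 2 * q₁ z.1 z.2 * p₁ z.1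
        ∂((volume : Measure (Euc d)).prod volume))
        = ∫ x', ∫ x, r₀ x' ^ 2 * q₁ x x' * p₁ x :=
      ((integral_integral (f := fun x x' => r₀ x' ^ 2 * q₁ x x' * p₁ x) hmarg₁).symm).trans
        (integral_integral_swap (f := fun x x' => r₀ x' ^ 2 * q₁ x x' * p₁ x) hmarg₁)
    rw [hpp, hM₁]
    refine integral_congr_ae (Filter.Eventually.of_forall fun x => ?_)
    show (∫ y, r₀ x ^ 2 * q₁ y x * p₁ y) = r₀ x ^ 2 * ∫ y, q₁ y x * p₁ y
    have e : (fun y => r₀ x ^ 2 * q₁ y x * p₁ y)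
        = fun y => r₀ x ^ 2 * (q₁ y x * p₁ y) := funext fun y => by ring
    rw [e, integral_const_mul]
  -- ∫prod sq = ∫ r² p
  have hS₀eq : (∫ z : Euc d × Euc d, r₀ z.1 ^ 2 * q₀ z.1 z.2 * p₀ z.1
      ∂((volume : Measure (Euc d)).prod volume)) = T3 := by
    have hpp : (∫ z : Euc d × Euc d, r₀ z.1 ^ 2 * q₀ z.1 z.2 * p₀ z.1
        ∂((volume : Measure (Euc d)).prod volume))
        = ∫ x, ∫ x', r₀ x ^ 2 * q₀ x x' * p₀ x :=
      (integral_integral (f := fun x x' => r₀ x ^ 2 * q₀ x x' * p₀ x) hsq₀).symm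
    rw [hpp, hT3]
    refine integral_congr_ae (Filter.Eventually.of_forall fun x => ?_)
    show (∫ x', r₀ x ^ 2 * q₀ x x' * p₀ x) = r₀ x ^ 2 * p₀ x
    have e : (fun x' => r₀ x ^ 2 * q₀ x x' * p₀ x)
        = fun x' => (r₀ x ^ 2 * p₀ x) * q₀ x x' := funext fun x' => by ring
    rw [e, integral_const_mul, hq₀1 x, mul_one]
  have hS₁eq : (∫ z : Euc d × Euc d, r₁ z.1 ^ 2 * q₁ z.1 z.2 * p₁ z.1
      ∂((volume : Measure (Euc d)).prod volume)) = T4 := by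
    have hpp : (∫ z : Euc d × Euc d, r₁ z.1 ^ 2 * q₁ z.1 z.2 * p₁ z.1
        ∂((volume : Measure (Euc d)).prod volume))
        = ∫ x, ∫ x', r₁ x ^ 2 * q₁ x x' * p₁ x :=
      (integral_integral (f := fun x x' => r₁ x ^ 2 * q₁ x x' * p₁ x) hsq₁).symm
    rw [hpp, hT4]
    refine integral_congr_ae (Filter.Eventually.of_forall fun x => ?_)
    show (∫ x', r₁ x ^ 2 * q₁ x x' * p₁ x) = r₁ x ^ 2 * p₁ x
    have e : (fun x' => r₁ x ^ 2 * q₁ x x' * p₁ x)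
        = fun x' => (r₁ x ^ 2 * p₁ x) * q₁ x x' := funext fun x' => by ring
    rw [e, integral_const_mul, hq₁1 x, mul_one]
  -- pair-loss expansion
  have hP₀ : (∫ x, ∫ x', (r₀ x - r₁ x') ^ 2 * q₀ x x' * p₀ x) = T3 - 2 * C₀ + M₀ := by
    have hpp : (∫ x, ∫ x', (r₀ x - r₁ x') ^ 2 * q₀ x x' * p₀ x)
        = ∫ z : Euc d × Euc d, (r₀ z.1 - r₁ z.2) ^ 2 * q₀ z.1 z.2 * p₀ z.1
            ∂((volume : Measure (Euc d)).prod volume) :=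
      integral_integral (f := fun x x' => (r₀ x - r₁ x') ^ 2 * q₀ x x' * p₀ x) hpair₀
    rw [hpp]
    have e : (fun z : Euc d × Euc d => (r₀ z.1 - r₁ z.2) ^ 2 * q₀ z.1 z.2 * p₀ z.1)
        = fun z : Euc d × Euc d =>
            (r₀ z.1 ^ 2 * q₀ z.1 z.2 * p₀ z.1 + r₁ z.2 ^ 2 * q₀ z.1 z.2 * p₀ z.1)
            - 2 * (r₁ z.2 * r₀ z.1 * q₀ z.1 z.2 * p₀ z.1) := funext fun z => by ring
    have hsub : (∫ z : Euc d × Euc d,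
          ((r₀ z.1 ^ 2 * q₀ z.1 z.2 * p₀ z.1 + r₁ z.2 ^ 2 * q₀ z.1 z.2 * p₀ z.1)
            - 2 * (r₁ z.2 * r₀ z.1 * q₀ z.1 z.2 * p₀ z.1))
          ∂((volume : Measure (Euc d)).prod volume))
        = (∫ z : Euc d × Euc d,
            (r₀ z.1 ^ 2 * q₀ z.1 z.2 * p₀ z.1 + r₁ z.2 ^ 2 * q₀ z.1 z.2 * p₀ z.1)
            ∂((volume : Measure (Euc d)).prod volume))
          - ∫ z : Euc d × Euc d, 2 * (r₁ z.2 * r₀ z.1 * q₀ z.1 z.2 * p₀ z.1)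
            ∂((volume : Measure (Euc d)).prod volume) :=
      integral_sub (hsq₀.add hmarg₀) (hcross₀.const_mul 2)
    have hadd : (∫ z : Euc d × Euc d,
          (r₀ z.1 ^ 2 * q₀ z.1 z.2 * p₀ z.1 + r₁ z.2 ^ 2 * q₀ z.1 z.2 * p₀ z.1)
          ∂((volume : Measure (Euc d)).prod volume))
        = (∫ z : Euc d × Euc d, r₀ z.1 ^ 2 * q₀ z.1 z.2 * p₀ z.1
            ∂((volume : Measure (Euc d)).prod volume))
          + ∫ z : Euc d × Euc d, r₁ z.2 ^ 2 * q₀ z.1 z.2 * p₀ z.1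
            ∂((volume : Measure (Euc d)).prod volume) :=
      integral_add hsq₀ hmarg₀
    have hmul : (∫ z : Euc d × Euc d, 2 * (r₁ z.2 * r₀ z.1 * q₀ z.1 z.2 * p₀ z.1)
          ∂((volume : Measure (Euc d)).prod volume))
        = 2 * ∫ z : Euc d × Euc d, r₁ z.2 * r₀ z.1 * q₀ z.1 z.2 * p₀ z.1
            ∂((volume : Measure (Euc d)).prod volume) :=
      integral_const_mul 2 _
    rw [e, hsub, hadd, hmul, hS₀eq, hM₀eq, ← hC₀]
    ring
  have hP₁ : (∫ x, ∫ x', (r₁ x - r₀ x') ^ 2 * q₁ x x' * p₁ x) = T4 - 2 * C₁ + M₁ := by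
    have hpp : (∫ x, ∫ x', (r₁ x - r₀ x') ^ 2 * q₁ x x' * p₁ x)
        = ∫ z : Euc d × Euc d, (r₁ z.1 - r₀ z.2) ^ 2 * q₁ z.1 z.2 * p₁ z.1
            ∂((volume : Measure (Euc d)).prod volume) :=
      integral_integral (f := fun x x' => (r₁ x - r₀ x') ^ 2 * q₁ x x' * p₁ x) hpair₁
    rw [hpp]
    have e : (fun z : Euc d × Euc d => (r₁ z.1 - r₀ z.2) ^ 2 * q₁ z.1 z.2 * p₁ z.1)
        = fun z : Euc d × Euc d =>
            (r₁ z.1 ^ 2 * q₁ z.1 z.2 * p₁ z.1 + r₀ z.2 ^ 2 * q₁ z.1 z.2 * p₁ z.1)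
            - 2 * (r₀ z.2 * r₁ z.1 * q₁ z.1 z.2 * p₁ z.1) := funext fun z => by ring
    have hcross₁' : Integrable (fun z : Euc d × Euc d =>
        r₀ z.2 * r₁ z.1 * q₁ z.1 z.2 * p₁ z.1)
        ((volume : Measure (Euc d)).prod volume) :=
      hcross₁.congr (Filter.Eventually.of_forall fun z => by ring)
    have hsub : (∫ z : Euc d × Euc d,
          ((r₁ z.1 ^ 2 * q₁ z.1 z.2 * p₁ z.1 + r₀ z.2 ^ 2 * q₁ z.1 z.2 * p₁ z.1)
            - 2 * (r₀ z.2 * r₁ z.1 * q₁ z.1 z.2 * p₁ z.1))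
          ∂((volume : Measure (Euc d)).prod volume))
        = (∫ z : Euc d × Euc d,
            (r₁ z.1 ^ 2 * q₁ z.1 z.2 * p₁ z.1 + r₀ z.2 ^ 2 * q₁ z.1 z.2 * p₁ z.1)
            ∂((volume : Measure (Euc d)).prod volume))
          - ∫ z : Euc d × Euc d, 2 * (r₀ z.2 * r₁ z.1 * q₁ z.1 z.2 * p₁ z.1)
            ∂((volume : Measure (Euc d)).prod volume) :=
      integral_sub (hsq₁.add hmarg₁) (hcross₁'.const_mul 2)
    have hadd : (∫ z : Euc d × Euc d,
          (r₁ z.1 ^ 2 * q₁ z.1 z.2 * p₁ z.1 + r₀ z.2 ^ 2 * q₁ z.1 z.2 * p₁ z.1)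
          ∂((volume : Measure (Euc d)).prod volume))
        = (∫ z : Euc d × Euc d, r₁ z.1 ^ 2 * q₁ z.1 z.2 * p₁ z.1
            ∂((volume : Measure (Euc d)).prod volume))
          + ∫ z : Euc d × Euc d, r₀ z.2 ^ 2 * q₁ z.1 z.2 * p₁ z.1
            ∂((volume : Measure (Euc d)).prod volume) :=
      integral_add hsq₁ hmarg₁
    have hmul : (∫ z : Euc d × Euc d, 2 * (r₀ z.2 * r₁ z.1 * q₁ z.1 z.2 * p₁ z.1)
          ∂((volume : Measure (Euc d)).prod volume))
        = 2 * ∫ z : Euc d × Euc d, r₀ z.2 * r₁ z.1 * q₁ z.1 z.2 * p₁ z.1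
            ∂((volume : Measure (Euc d)).prod volume) :=
      integral_const_mul 2 _
    rw [e, hsub, hadd, hmul, hS₁eq, hM₁eq, ← hC₁]
    ring
  -- ITE expansion
  have hA₀ : (∫ x, (r₁ x - r₀ x) ^ 2 * p₀ x) = T1 - 2 * T2 + T3 := by
    have e : (fun x => (r₁ x - r₀ x) ^ 2 * p₀ x)
        = fun x => (r₁ x ^ 2 * p₀ x + r₀ x ^ 2 * p₀ x) - 2 * (r₀ x * r₁ x * p₀ x) :=
      funext fun x => by ring
    have hsub : (∫ x, ((r₁ x ^ 2 * p₀ x + r₀ x ^ 2 * p₀ x) - 2 * (r₀ x * r₁ x * p₀ x)))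
        = (∫ x, (r₁ x ^ 2 * p₀ x + r₀ x ^ 2 * p₀ x)) - ∫ x, 2 * (r₀ x * r₁ x * p₀ x) :=
      integral_sub (hr₁p₀.add hr₀p₀) (hD₀.const_mul 2)
    have hadd : (∫ x, (r₁ x ^ 2 * p₀ x + r₀ x ^ 2 * p₀ x))
        = (∫ x, r₁ x ^ 2 * p₀ x) + ∫ x, r₀ x ^ 2 * p₀ x :=
      integral_add hr₁p₀ hr₀p₀
    have hmul : (∫ x, 2 * (r₀ x * r₁ x * p₀ x)) = 2 * ∫ x, r₀ x * r₁ x * p₀ x :=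
      integral_const_mul 2 _
    rw [e, hsub, hadd, hmul, ← hT1, ← hT2, ← hT3]
    ring
  have hA₁ : (∫ x, (r₁ x - r₀ x) ^ 2 * p₁ x) = T4 - 2 * T5 + T6 := by
    have e : (fun x => (r₁ x - r₀ x) ^ 2 * p₁ x)
        = fun x => (r₁ x ^ 2 * p₁ x + r₀ x ^ 2 * p₁ x) - 2 * (r₁ x * r₀ x * p₁ x) :=
      funext fun x => by ring
    have hsub : (∫ x, ((r₁ x ^ 2 * p₁ x + r₀ x ^ 2 * p₁ x) - 2 * (r₁ x * r₀ x * p₁ x)))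
        = (∫ x, (r₁ x ^ 2 * p₁ x + r₀ x ^ 2 * p₁ x)) - ∫ x, 2 * (r₁ x * r₀ x * p₁ x) :=
      integral_sub (hr₁p₁.add hr₀p₁) (hD₁.const_mul 2)
    have hadd : (∫ x, (r₁ x ^ 2 * p₁ x + r₀ x ^ 2 * p₁ x))
        = (∫ x, r₁ x ^ 2 * p₁ x) + ∫ x, r₀ x ^ 2 * p₁ x :=
      integral_add hr₁p₁ hr₀p₁
    have hmul : (∫ x, 2 * (r₁ x * r₀ x * p₁ x)) = 2 * ∫ x, r₁ x * r₀ x * p₁ x :=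
      integral_const_mul 2 _
    rw [e, hsub, hadd, hmul, ← hT4, ← hT5, ← hT6]
    ring
  have hA₀int : Integrable (fun x => (r₁ x - r₀ x) ^ 2 * p₀ x) := by
    refine ((hr₁p₀.add hr₀p₀).sub (hD₀.const_mul 2)).congr
      (Filter.Eventually.of_forall fun x => ?_)
    simp only [Pi.add_apply, Pi.sub_apply]
    ring
  have hA₁int : Integrable (fun x => (r₁ x - r₀ x) ^ 2 * p₁ x) := by
    refine ((hr₁p₁.add hr₀p₁).sub (hD₁.const_mul 2)).congr
      (Filter.Eventually.of_forall fun x => ?_)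
    simp only [Pi.add_apply, Pi.sub_apply]
    ring
  have hA : (∫ x, (r₁ x - r₀ x) ^ 2 * (u₀ * p₀ x + u₁ * p₁ x))
      = u₀ * (∫ x, (r₁ x - r₀ x) ^ 2 * p₀ x) + u₁ * (∫ x, (r₁ x - r₀ x) ^ 2 * p₁ x) := by
    have e : (fun x => (r₁ x - r₀ x) ^ 2 * (u₀ * p₀ x + u₁ * p₁ x))
        = fun x => u₀ * ((r₁ x - r₀ x) ^ 2 * p₀ x) + u₁ * ((r₁ x - r₀ x) ^ 2 * p₁ x) :=
      funext fun x => by ring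
    rw [e, integral_add (hA₀int.const_mul u₀) (hA₁int.const_mul u₁),
      integral_const_mul, integral_const_mul]
  -- right-hand side pieces
  have hR1 : (∫ x, r₁ x ^ 2 * (p₀ x - ∫ y, q₀ y x * p₀ y)) = T1 - M₀ := by
    have e : (fun x => r₁ x ^ 2 * (p₀ x - ∫ y, q₀ y x * p₀ y))
        = fun x => r₁ x ^ 2 * p₀ x - r₁ x ^ 2 * (∫ y, q₀ y x * p₀ y) :=
      funext fun x => by ring
    rw [e, integral_sub hr₁p₀ hr₁Q₀, ← hT1, ← hM₀]
  have hR2 : (∫ x, r₀ x ^ 2 * (p₁ x - ∫ y, q₁ y x * p₁ y)) = T6 - M₁ := by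
    have e : (fun x => r₀ x ^ 2 * (p₁ x - ∫ y, q₁ y x * p₁ y))
        = fun x => r₀ x ^ 2 * p₁ x - r₀ x ^ 2 * (∫ y, q₁ y x * p₁ y) :=
      funext fun x => by ring
    rw [e, integral_sub hr₀p₁ hr₀Q₁, ← hT6, ← hM₁]
  -- gap-function cross terms
  have hG10 : (∫ x, r₀ x * (∫ x', (r₁ x' - r₁ x) * q₀ x x') * p₀ x) = C₀ - T2 :=
    aux_G hq₀1 hcross₀ hD₀
  have hG01 : (∫ x, r₁ x * (∫ x', (r₀ x' - r₀ x) * q₁ x x') * p₁ x) = C₁ - T5 := by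
    have := aux_G (r := r₁) (s := r₀) (p := p₁) hq₁1
      (hcross₁.congr (Filter.Eventually.of_forall fun z => by ring)) hD₁
    rw [this]
  rw [hA, hA₀, hA₁, hP₀, hP₁, hR1, hR2, hG10, hG01]
  ring
end
end

section
/- (Theorem 5.11, ITE risk bound via factual loss, Shalit et al.) Assume there is B > 0 such that (1/B)·r_0² ∈ G and (1/B)·r_1² ∈ G, and that ε_F^0, ε_F^1 and IPM_G(p_1, p_0) are finite with all integrals below well defined. Then ε_ITE ≤ 2·( ε_F^0 + ε_F^1 + B · IPM_G(p_1, p_0) ). -/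
open MeasureTheory

noncomputable section

/-- Integral probability metric for a family `G` of functions:
`IPM_G(p,q) = sup_{g ∈ G} |∫ g(x)(p(x) − q(x)) dx|`. -/
def IPM {d : ℕ} (G : Set (Euc d → ℝ)) (p q : Euc d → ℝ) : ℝ :=
  sSup ((fun g => |∫ x, g x * (p x - q x)|) '' G)

/-- **Theorem 5.11 (ITE risk bound via factual loss, Shalit et al.).**
`ε_ITE ≤ 2 (ε_F^0 + ε_F^1 + B · IPM_G(p₁, p₀))`. -/
theorem ite_risk_bound_factual_loss {d : ℕ}
    (p₀ p₁ r₀ r₁ : Euc d → ℝ) (u₀ u₁ B : ℝ) (G : Set (Euc d → ℝ))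
    -- densities
    (hp₀m : Measurable p₀) (hp₁m : Measurable p₁)
    (hp₀0 : ∀ x, 0 ≤ p₀ x) (hp₁0 : ∀ x, 0 ≤ p₁ x)
    (hp₀1 : (∫ x, p₀ x) = 1) (hp₁1 : (∫ x, p₁ x) = 1)
    -- treatment marginals
    (hu₀ : 0 ≤ u₀) (hu₁ : 0 ≤ u₁) (hu : u₀ + u₁ = 1)
    -- residuals
    (hr₀m : Measurable r₀) (hr₁m : Measurable r₁)
    -- `(1/B)·r_t² ∈ G`
    (hB : 0 < B)
    (hG₀ : (fun x => (1 / B) * r₀ x ^ 2) ∈ G)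
    (hG₁ : (fun x => (1 / B) * r₁ x ^ 2) ∈ G)
    -- `ε_F^0`, `ε_F^1` and all integrals below are well defined (finite)
    (hr₀p₀ : Integrable (fun x => r₀ x ^ 2 * p₀ x))
    (hr₁p₁ : Integrable (fun x => r₁ x ^ 2 * p₁ x))
    (hr₁p₀ : Integrable (fun x => r₁ x ^ 2 * p₀ x))
    (hr₀p₁ : Integrable (fun x => r₀ x ^ 2 * p₁ x))
    (hITE : Integrable (fun x => (r₁ x - r₀ x) ^ 2 * (u₀ * p₀ x + u₁ * p₁ x)))
    -- `IPM_G(p₁, p₀)` is finite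
    (hbdd : BddAbove ((fun g => |∫ x, g x * (p₁ x - p₀ x)|) '' G)) :
    (∫ x, (r₁ x - r₀ x) ^ 2 * (u₀ * p₀ x + u₁ * p₁ x)) ≤
      2 * ((∫ x, r₀ x ^ 2 * p₀ x) + (∫ x, r₁ x ^ 2 * p₁ x) +
            B * IPM G p₁ p₀) := by
  classical
  set A0 := ∫ x, r₀ x ^ 2 * p₀ x with hA0
  set A1 := ∫ x, r₁ x ^ 2 * p₁ x with hA1
  set C0 := ∫ x, r₀ x ^ 2 * p₁ x with hC0
  set C1 := ∫ x, r₁ x ^ 2 * p₀ x with hC1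
  have key : ∀ (r : Euc d → ℝ), (fun x => (1 / B) * r x ^ 2) ∈ G →
      Integrable (fun x => r x ^ 2 * p₀ x) → Integrable (fun x => r x ^ 2 * p₁ x) →
      |(∫ x, r x ^ 2 * p₁ x) - (∫ x, r x ^ 2 * p₀ x)| ≤ B * IPM G p₁ p₀ := by
    intro r hGmem hi0 hi1
    have hmem : |∫ x, ((1 / B) * r x ^ 2) * (p₁ x - p₀ x)| ≤ IPM G p₁ p₀ :=
      le_csSup hbdd ⟨_, hGmem, rfl⟩
    have hcalc : (∫ x, ((1 / B) * r x ^ 2) * (p₁ x - p₀ x)) =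
        (1 / B) * ((∫ x, r x ^ 2 * p₁ x) - (∫ x, r x ^ 2 * p₀ x)) := by
      have : (fun x => ((1 / B) * r x ^ 2) * (p₁ x - p₀ x)) =
          (fun x => (1 / B) * (r x ^ 2 * p₁ x - r x ^ 2 * p₀ x)) := by
        funext x; ring
      rw [this, integral_const_mul, integral_sub hi1 hi0]
    rw [hcalc, abs_mul, abs_of_pos (by positivity : (0:ℝ) < 1 / B)] at hmem
    have := mul_le_mul_of_nonneg_left hmem (le_of_lt hB)
    calc |(∫ x, r x ^ 2 * p₁ x) - (∫ x, r x ^ 2 * p₀ x)|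
        = B * (1 / B * |(∫ x, r x ^ 2 * p₁ x) - (∫ x, r x ^ 2 * p₀ x)|) := by
          field_simp
      _ ≤ B * IPM G p₁ p₀ := this
  have h1 : C1 ≤ A1 + B * IPM G p₁ p₀ := by
    have := key r₁ hG₁ hr₁p₀ hr₁p₁
    have h := neg_abs_le (A1 - C1); rw [hA1, hC1] at h ⊢; linarith [this, h]
  have h0 : C0 ≤ A0 + B * IPM G p₁ p₀ := by
    have := key r₀ hG₀ hr₀p₀ hr₀p₁
    have h := le_abs_self (C0 - A0); rw [hA0, hC0] at h ⊢; linarith [this, h]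
  -- pointwise bound and monotonicity
  have hint2 : Integrable (fun x => (2 * r₀ x ^ 2 + 2 * r₁ x ^ 2) * (u₀ * p₀ x + u₁ * p₁ x)) := by
    have : (fun x => (2 * r₀ x ^ 2 + 2 * r₁ x ^ 2) * (u₀ * p₀ x + u₁ * p₁ x)) =
        (fun x => (2 * u₀) * (r₀ x ^ 2 * p₀ x) + (2 * u₁) * (r₀ x ^ 2 * p₁ x)
          + ((2 * u₀) * (r₁ x ^ 2 * p₀ x) + (2 * u₁) * (r₁ x ^ 2 * p₁ x))) := by
      funext x; ring
    rw [this]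
    exact ((hr₀p₀.const_mul _).add (hr₀p₁.const_mul _)).add
      ((hr₁p₀.const_mul _).add (hr₁p₁.const_mul _))
  have hmono : (∫ x, (r₁ x - r₀ x) ^ 2 * (u₀ * p₀ x + u₁ * p₁ x)) ≤
      ∫ x, (2 * r₀ x ^ 2 + 2 * r₁ x ^ 2) * (u₀ * p₀ x + u₁ * p₁ x) := by
    refine integral_mono hITE hint2 (fun x => ?_)
    have hw : 0 ≤ u₀ * p₀ x + u₁ * p₁ x :=
      add_nonneg (mul_nonneg hu₀ (hp₀0 x)) (mul_nonneg hu₁ (hp₁0 x))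
    have : (r₁ x - r₀ x) ^ 2 ≤ 2 * r₀ x ^ 2 + 2 * r₁ x ^ 2 := by nlinarith [sq_nonneg (r₁ x + r₀ x)]
    exact mul_le_mul_of_nonneg_right this hw
  have hcalc2 : (∫ x, (2 * r₀ x ^ 2 + 2 * r₁ x ^ 2) * (u₀ * p₀ x + u₁ * p₁ x)) =
      (2 * u₀) * A0 + (2 * u₁) * C0 + ((2 * u₀) * C1 + (2 * u₁) * A1) := by
    have i1 : Integrable (fun x => (2 * u₀) * (r₀ x ^ 2 * p₀ x)) := hr₀p₀.const_mul _
    have i2 : Integrable (fun x => (2 * u₁) * (r₀ x ^ 2 * p₁ x)) := hr₀p₁.const_mul _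
    have i3 : Integrable (fun x => (2 * u₀) * (r₁ x ^ 2 * p₀ x)) := hr₁p₀.const_mul _
    have i4 : Integrable (fun x => (2 * u₁) * (r₁ x ^ 2 * p₁ x)) := hr₁p₁.const_mul _
    have i12 : Integrable (fun x => (2 * u₀) * (r₀ x ^ 2 * p₀ x) + (2 * u₁) * (r₀ x ^ 2 * p₁ x)) :=
      i1.add i2
    have i34 : Integrable (fun x => (2 * u₀) * (r₁ x ^ 2 * p₀ x) + (2 * u₁) * (r₁ x ^ 2 * p₁ x)) :=
      i3.add i4
    have this2 : (fun x => (2 * r₀ x ^ 2 + 2 * r₁ x ^ 2) * (u₀ * p₀ x + u₁ * p₁ x)) =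
        (fun x => ((2 * u₀) * (r₀ x ^ 2 * p₀ x) + (2 * u₁) * (r₀ x ^ 2 * p₁ x))
          + ((2 * u₀) * (r₁ x ^ 2 * p₀ x) + (2 * u₁) * (r₁ x ^ 2 * p₁ x))) := by
      funext x; ring
    rw [this2, integral_add i12 i34, integral_add i1 i2, integral_add i3 i4,
      integral_const_mul, integral_const_mul, integral_const_mul, integral_const_mul]
  have hipm : 0 ≤ IPM G p₁ p₀ := le_csSup_of_le hbdd ⟨_, hG₀, rfl⟩ (abs_nonneg _)
  rw [hcalc2] at hmono
  set I := B * IPM G p₁ p₀ with hI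
  have e0 : (u₀ + u₁) * A0 = A0 := by rw [hu, one_mul]
  have e1 : (u₀ + u₁) * A1 = A1 := by rw [hu, one_mul]
  have eI : (u₀ + u₁) * I = I := by rw [hu, one_mul]
  have q0 : u₁ * C0 ≤ u₁ * (A0 + I) := mul_le_mul_of_nonneg_left h0 hu₁
  have q1 : u₀ * C1 ≤ u₀ * (A1 + I) := mul_le_mul_of_nonneg_left h1 hu₀
  nlinarith [hmono, e0, e1, eI, q0, q1]

end
end

section
/- (Cauchy–Schwarz bound on the residual-alignment term) Assume r_0 is K_0-Lipschitz, for every x the expected neighbor distance satisfies ∫ ‖x − x'‖ q_1(x'|x) dx' ≤ δ, the factual error ε_F^1 = ∫ r_1(x)² p_1(x) dx is finite, and r_1·g_{01}·p_1 is integrable. Then | ∫ r_1(x) g_{01}(x) p_1(x) dx | ≤ K_0 · δ · √(ε_F^1). -/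
open MeasureTheory

noncomputable section

/-- **Cauchy–Schwarz bound on the residual-alignment term.**
`|∫ r₁(x) g₀₁(x) p₁(x) dx| ≤ K₀ · δ · √(ε_F^1)`, where
`g₀₁(x) = ∫ (r₀(x') − r₀(x)) q₁(x'|x) dx'` and `ε_F^1 = ∫ r₁(x)² p₁(x) dx`.
Here `q₁ x x'` denotes the conditional density `q₁(x'|x)`. -/
theorem residual_alignment_bound {d : ℕ}
    (p₁ r₀ r₁ : Euc d → ℝ) (q₁ : Euc d → Euc d → ℝ) (K₀ δ : ℝ)
    -- density
    (hp₁m : Measurable p₁) (hp₁0 : ∀ x, 0 ≤ p₁ x) (hp₁1 : (∫ x, p₁ x) = 1)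
    -- residuals
    (hr₀m : Measurable r₀) (hr₁m : Measurable r₁)
    -- neighborhood conditional density
    (hq₁m : Measurable (fun z : Euc d × Euc d => q₁ z.1 z.2))
    (hq₁0 : ∀ x x', 0 ≤ q₁ x x')
    (hq₁1 : ∀ x, (∫ x', q₁ x x') = 1)
    -- `r₀` is `K₀`-Lipschitz
    (hK₀ : 0 ≤ K₀)
    (hLip₀ : ∀ x y, |r₀ x - r₀ y| ≤ K₀ * ‖x - y‖)
    -- expected neighbor distance bounded by `δ`
    (hδ : 0 ≤ δ)
    (hnbr₁ : ∀ x, (∫ x', ‖x - x'‖ * q₁ x x') ≤ δ)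
    (hdist₁ : ∀ x, Integrable (fun x' => ‖x - x'‖ * q₁ x x'))
    (hgint₁ : ∀ x, Integrable (fun x' => (r₀ x' - r₀ x) * q₁ x x'))
    -- `ε_F^1` finite and `r₁·g₀₁·p₁` integrable
    (hr₁p₁ : Integrable (fun x => r₁ x ^ 2 * p₁ x))
    (hg₀₁ : Integrable (fun x => r₁ x * (∫ x', (r₀ x' - r₀ x) * q₁ x x') * p₁ x)) :
    |∫ x, r₁ x * (∫ x', (r₀ x' - r₀ x) * q₁ x x') * p₁ x| ≤
      K₀ * δ * Real.sqrt (∫ x, r₁ x ^ 2 * p₁ x) := by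
  -- p₁ is integrable (otherwise its integral would be 0, not 1)
  have hp₁int : Integrable p₁ := by
    by_contra h
    rw [integral_undef h] at hp₁1
    norm_num at hp₁1
  -- pointwise bound on the gap function
  have hg_bound : ∀ x, |∫ x', (r₀ x' - r₀ x) * q₁ x x'| ≤ K₀ * δ := by
    intro x
    calc |∫ x', (r₀ x' - r₀ x) * q₁ x x'|
        ≤ ∫ x', |(r₀ x' - r₀ x) * q₁ x x'| := by
          simpa [Real.norm_eq_abs, abs_mul] using
            norm_integral_le_integral_norm (μ := volume)
              (fun x' => (r₀ x' - r₀ x) * q₁ x x')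
      _ ≤ ∫ x', K₀ * (‖x - x'‖ * q₁ x x') := by
          refine integral_mono (hgint₁ x).abs ((hdist₁ x).const_mul K₀) (fun x' => ?_)
          rw [abs_mul, abs_of_nonneg (hq₁0 x x'), ← mul_assoc]
          refine mul_le_mul_of_nonneg_right ?_ (hq₁0 x x')
          calc |r₀ x' - r₀ x| ≤ K₀ * ‖x' - x‖ := hLip₀ x' x
            _ = K₀ * ‖x - x'‖ := by rw [norm_sub_rev]
      _ = K₀ * ∫ x', ‖x - x'‖ * q₁ x x' := integral_const_mul _ _
      _ ≤ K₀ * δ := mul_le_mul_of_nonneg_left (hnbr₁ x) hK₀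
  -- integrability of |r₁| p₁
  have habs_int : Integrable (fun x => |r₁ x| * p₁ x) := by
    refine Integrable.mono' (hr₁p₁.add hp₁int)
      ((hr₁m.abs.mul hp₁m).aestronglyMeasurable) (Filter.Eventually.of_forall fun x => ?_)
    have h1 : 0 ≤ |r₁ x| * p₁ x := mul_nonneg (abs_nonneg _) (hp₁0 x)
    rw [Real.norm_of_nonneg h1]
    have h2 : |r₁ x| ≤ r₁ x ^ 2 + 1 := by nlinarith [sq_abs (r₁ x), sq_nonneg (|r₁ x| - 1)]
    calc |r₁ x| * p₁ x ≤ (r₁ x ^ 2 + 1) * p₁ x :=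
          mul_le_mul_of_nonneg_right h2 (hp₁0 x)
      _ = r₁ x ^ 2 * p₁ x + p₁ x := by ring
  -- Cauchy–Schwarz: ∫ |r₁| p₁ ≤ √(∫ r₁² p₁)
  have hCS : (∫ x, |r₁ x| * p₁ x) ≤ Real.sqrt (∫ x, r₁ x ^ 2 * p₁ x) := by
    set f : Euc d → ℝ := fun x => |r₁ x| * Real.sqrt (p₁ x) with hf_def
    set g : Euc d → ℝ := fun x => Real.sqrt (p₁ x) with hg_def
    have hfm : Measurable f := hr₁m.abs.mul hp₁m.sqrt
    have hgm : Measurable g := hp₁m.sqrt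
    have hfsq : ∀ x, f x ^ 2 = r₁ x ^ 2 * p₁ x := fun x => by
      simp only [hf_def, mul_pow, sq_abs, Real.sq_sqrt (hp₁0 x)]
    have hgsq : ∀ x, g x ^ 2 = p₁ x := fun x => Real.sq_sqrt (hp₁0 x)
    have hfL2 : MemLp f 2 volume := by
      refine (memLp_two_iff_integrable_sq hfm.aestronglyMeasurable).2 ?_
      exact hr₁p₁.congr (Filter.Eventually.of_forall fun x => (hfsq x).symm)
    have hgL2 : MemLp g 2 volume := by
      refine (memLp_two_iff_integrable_sq hgm.aestronglyMeasurable).2 ?_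
      exact hp₁int.congr (Filter.Eventually.of_forall fun x => (hgsq x).symm)
    have h2 : ENNReal.ofReal (2 : ℝ) = 2 := by simp
    have hpq : Real.HolderConjugate 2 2 := Real.holderConjugate_iff.mpr ⟨one_lt_two, by norm_num⟩
    have key := integral_mul_le_Lp_mul_Lq_of_nonneg (μ := volume) hpq
      (Filter.Eventually.of_forall fun x => mul_nonneg (abs_nonneg _) (Real.sqrt_nonneg _))
      (Filter.Eventually.of_forall fun x => Real.sqrt_nonneg _)
      (by rw [h2]; exact hfL2) (by rw [h2]; exact hgL2)
    have hfg : ∀ x, f x * g x = |r₁ x| * p₁ x := fun x => by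
      simp only [hf_def, hg_def, mul_assoc, Real.mul_self_sqrt (hp₁0 x)]
    have hrw1 : (∫ x, f x * g x) = ∫ x, |r₁ x| * p₁ x :=
      integral_congr_ae (Filter.Eventually.of_forall fun x => hfg x)
    have hrpow : ∀ (y : ℝ), y ^ (2:ℝ) = y ^ (2:ℕ) := fun y => by
      rw [show (2:ℝ) = ((2:ℕ):ℝ) by norm_num, Real.rpow_natCast]
    have hrw2 : (∫ x, f x ^ (2:ℝ)) = ∫ x, r₁ x ^ 2 * p₁ x :=
      integral_congr_ae (Filter.Eventually.of_forall fun x => by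
        show f x ^ (2:ℝ) = r₁ x ^ 2 * p₁ x
        rw [hrpow, hfsq])
    have hrw3 : (∫ x, g x ^ (2:ℝ)) = (1:ℝ) := by
      rw [integral_congr_ae (Filter.Eventually.of_forall (fun x => by
        show g x ^ (2:ℝ) = p₁ x
        rw [hrpow, hgsq x]))]
      exact hp₁1
    rw [hrw1, hrw2, hrw3] at key
    calc (∫ x, |r₁ x| * p₁ x)
        ≤ (∫ x, r₁ x ^ 2 * p₁ x) ^ (1/2:ℝ) * (1:ℝ) ^ (1/2:ℝ) := key
      _ = Real.sqrt (∫ x, r₁ x ^ 2 * p₁ x) := by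
          rw [Real.one_rpow, mul_one, ← Real.sqrt_eq_rpow]
  -- put everything together
  have hKδ : 0 ≤ K₀ * δ := mul_nonneg hK₀ hδ
  calc |∫ x, r₁ x * (∫ x', (r₀ x' - r₀ x) * q₁ x x') * p₁ x|
      ≤ ∫ x, |r₁ x * (∫ x', (r₀ x' - r₀ x) * q₁ x x') * p₁ x| := by
        simpa [Real.norm_eq_abs, abs_mul] using norm_integral_le_integral_norm
          (μ := volume) (fun x => r₁ x * (∫ x', (r₀ x' - r₀ x) * q₁ x x') * p₁ x)
    _ ≤ ∫ x, K₀ * δ * (|r₁ x| * p₁ x) := by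
        refine integral_mono hg₀₁.abs (habs_int.const_mul _) (fun x => ?_)
        rw [abs_mul, abs_mul, abs_of_nonneg (hp₁0 x)]
        have := hg_bound x
        calc |r₁ x| * |∫ x', (r₀ x' - r₀ x) * q₁ x x'| * p₁ x
            ≤ |r₁ x| * (K₀ * δ) * p₁ x := by
              refine mul_le_mul_of_nonneg_right ?_ (hp₁0 x)
              exact mul_le_mul_of_nonneg_left this (abs_nonneg _)
          _ = K₀ * δ * (|r₁ x| * p₁ x) := by ring
    _ = K₀ * δ * ∫ x, |r₁ x| * p₁ x := integral_const_mul _ _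
    _ ≤ K₀ * δ * Real.sqrt (∫ x, r₁ x ^ 2 * p₁ x) :=
        mul_le_mul_of_nonneg_left hCS hKδ

end
end

section
/- (Triangle-inequality step in the proof of Theorem 5.9) Assume all the integrals below are finite and Fubini's theorem applies to the double integrals. Then ε_ITE ≤ ε_pair + u_0·| ∫ r_1(x)² (p_0(x) − q_0(x)) dx | + u_1·| ∫ r_0(x)² (p_1(x) − q_1(x)) dx | + 2·u_1·| ∫ r_1(x) g_{01}(x) p_1(x) dx | + 2·u_0·| ∫ r_0(x) g_{10}(x) p_0(x) dx |. -/
open MeasureTheory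

noncomputable section

lemma integrable_of_integral_eq_one' {d : ℕ} {f : Euc d → ℝ}
    (h : (∫ x, f x) = 1) : Integrable f := by
  by_contra hc
  rw [integral_undef hc] at h
  norm_num at h

lemma key_identity {d : ℕ} (p r s : Euc d → ℝ) (q : Euc d → Euc d → ℝ)
    (hq1 : ∀ x, (∫ x', q x x') = 1)
    (hpair : Integrable (fun z : Euc d × Euc d =>
      (r z.1 - s z.2) ^ 2 * q z.1 z.2 * p z.1))
    (hcross : Integrable (fun z : Euc d × Euc d =>
      r z.1 * s z.2 * q z.1 z.2 * p z.1))
    (hmarg : Integrable (fun z : Euc d × Euc d =>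
      s z.2 ^ 2 * q z.1 z.2 * p z.1))
    (hrp : Integrable (fun x => r x ^ 2 * p x))
    (hsp : Integrable (fun x => s x ^ 2 * p x))
    (hrsp : Integrable (fun x => r x * s x * p x))
    (hsQ : Integrable (fun x => s x ^ 2 * (∫ y, q y x * p y)))
    (hg : Integrable (fun x => r x * (∫ x', (s x' - s x) * q x x') * p x)) :
    (∫ x, (r x - s x) ^ 2 * p x) =
      (∫ x, ∫ x', (r x - s x') ^ 2 * q x x' * p x)
      + (∫ x, s x ^ 2 * (p x - ∫ y, q y x * p y))
      + 2 * (∫ x, r x * (∫ x', (s x' - s x) * q x x') * p x) := by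
  have hvol : (volume : Measure (Euc d × Euc d)) = volume.prod volume :=
    Measure.volume_eq_prod _ _
  rw [hvol] at hpair hcross hmarg
  -- integrability of the r² piece on the product
  have hsq : Integrable (fun z : Euc d × Euc d =>
      r z.1 ^ 2 * q z.1 z.2 * p z.1) ((volume : Measure (Euc d)).prod volume) := by
    have e : (fun z : Euc d × Euc d => r z.1 ^ 2 * q z.1 z.2 * p z.1)
        = fun z => ((r z.1 - s z.2) ^ 2 * q z.1 z.2 * p z.1
          + 2 * (r z.1 * s z.2 * q z.1 z.2 * p z.1))
          - s z.2 ^ 2 * q z.1 z.2 * p z.1 := by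
      funext z; ring
    rw [e]
    exact (hpair.add (hcross.const_mul 2)).sub hmarg
  -- iterated = product for the pair integral
  have ePz : (∫ x, ∫ x', (r x - s x') ^ 2 * q x x' * p x)
      = ∫ z, (r z.1 - s z.2) ^ 2 * q z.1 z.2 * p z.1 ∂(volume : Measure (Euc d)).prod volume :=
    (integral_prod _ hpair).symm
  -- split the product integral into three pieces
  have hsub : Integrable (fun z : Euc d × Euc d =>
      r z.1 ^ 2 * q z.1 z.2 * p z.1 - 2 * (r z.1 * s z.2 * q z.1 z.2 * p z.1)) ((volume : Measure (Euc d)).prod volume) :=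
    hsq.sub (hcross.const_mul 2)
  have esplit : (∫ z, (r z.1 - s z.2) ^ 2 * q z.1 z.2 * p z.1 ∂(volume : Measure (Euc d)).prod volume)
      = (∫ z, r z.1 ^ 2 * q z.1 z.2 * p z.1 ∂(volume : Measure (Euc d)).prod volume)
        - 2 * (∫ z, r z.1 * s z.2 * q z.1 z.2 * p z.1 ∂(volume : Measure (Euc d)).prod volume)
        + (∫ z, s z.2 ^ 2 * q z.1 z.2 * p z.1 ∂(volume : Measure (Euc d)).prod volume) := by
    have e : (fun z : Euc d × Euc d => (r z.1 - s z.2) ^ 2 * q z.1 z.2 * p z.1)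
        = fun z => (r z.1 ^ 2 * q z.1 z.2 * p z.1
            - 2 * (r z.1 * s z.2 * q z.1 z.2 * p z.1))
          + s z.2 ^ 2 * q z.1 z.2 * p z.1 := by
      funext z; ring
    rw [e, integral_add hsub hmarg, integral_sub hsq (hcross.const_mul 2),
      integral_const_mul]
  -- the r² term
  have eA : (∫ z, r z.1 ^ 2 * q z.1 z.2 * p z.1 ∂(volume : Measure (Euc d)).prod volume) = ∫ x, r x ^ 2 * p x := by
    rw [integral_prod _ hsq]
    refine integral_congr_ae (Filter.Eventually.of_forall fun x => ?_)
    dsimp only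
    have e : (fun y => r x ^ 2 * q x y * p x)
        = fun y => (r x ^ 2 * p x) * q x y := by funext y; ring
    rw [e, integral_const_mul, hq1 x, mul_one]
  -- the cross term
  have eB : (∫ z, r z.1 * s z.2 * q z.1 z.2 * p z.1 ∂(volume : Measure (Euc d)).prod volume)
      = (∫ x, r x * (∫ x', (s x' - s x) * q x x') * p x)
        + ∫ x, r x * s x * p x := by
    rw [integral_prod _ hcross, ← integral_add hg hrsp]
    refine integral_congr_ae ?_
    filter_upwards [hcross.prod_right_ae] with x hx
    by_cases hc : r x * p x = 0
    · have e0 : (fun y => r x * s y * q x y * p x) = fun _ => (0 : ℝ) := by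
        funext y
        have e' : r x * s y * q x y * p x = (r x * p x) * (s y * q x y) := by ring
        rw [e', hc, zero_mul]
      have e1 : r x * (∫ x', (s x' - s x) * q x x') * p x + r x * s x * p x
          = (r x * p x) * ((∫ x', (s x' - s x) * q x x') + s x) := by ring
      rw [e0, e1, hc, zero_mul, integral_zero]
    · have hq : Integrable (fun y => q x y) := integrable_of_integral_eq_one' (hq1 x)
      have hsq' : Integrable (fun y => s y * q x y) := by
        have h2 := hx.const_mul (r x * p x)⁻¹
        have e2 : (fun y => (r x * p x)⁻¹ * (r x * s y * q x y * p x))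
            = fun y => s y * q x y := by
          funext y; rw [show r x * s y * q x y * p x = (r x * p x) * (s y * q x y) by ring, ← mul_assoc, inv_mul_cancel₀ hc, one_mul]
        rwa [e2] at h2
      have hsxq : Integrable (fun y => s x * q x y) := hq.const_mul (s x)
      have e1 : (∫ x', (s x' - s x) * q x x') = (∫ y, s y * q x y) - s x := by
        have e : (fun x' => (s x' - s x) * q x x')
            = fun x' => s x' * q x x' - s x * q x x' := by funext y; ring
        rw [e, integral_sub hsq' hsxq, integral_const_mul, hq1 x, mul_one]
      have e2 : (∫ y, r x * s y * q x y * p x)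
          = (r x * p x) * ∫ y, s y * q x y := by
        rw [← integral_const_mul]
        refine integral_congr_ae (Filter.Eventually.of_forall fun y => ?_)
        ring
      rw [e2, e1]; ring
  -- the marginal term
  have eC : (∫ z, s z.2 ^ 2 * q z.1 z.2 * p z.1 ∂(volume : Measure (Euc d)).prod volume)
      = ∫ x, s x ^ 2 * (∫ y, q y x * p y) := by
    rw [integral_prod_symm _ hmarg]
    refine integral_congr_ae (Filter.Eventually.of_forall fun x => ?_)
    dsimp only
    have e : (fun y => s x ^ 2 * q y x * p y)
        = fun y => s x ^ 2 * (q y x * p y) := by funext y; ring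
    rw [e, integral_const_mul]
  -- the B term splits
  have eBB : (∫ x, s x ^ 2 * (p x - ∫ y, q y x * p y))
      = (∫ x, s x ^ 2 * p x) - ∫ x, s x ^ 2 * (∫ y, q y x * p y) := by
    have e : (fun x => s x ^ 2 * (p x - ∫ y, q y x * p y))
        = fun x => s x ^ 2 * p x - s x ^ 2 * (∫ y, q y x * p y) := by
      funext x; ring
    rw [e, integral_sub hsp hsQ]
  -- LHS splits
  have hsub2 : Integrable (fun x => r x ^ 2 * p x - 2 * (r x * s x * p x)) :=
    hrp.sub (hrsp.const_mul 2)
  have eL : (∫ x, (r x - s x) ^ 2 * p x)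
      = (∫ x, r x ^ 2 * p x) - 2 * (∫ x, r x * s x * p x) + ∫ x, s x ^ 2 * p x := by
    have e : (fun x => (r x - s x) ^ 2 * p x)
        = fun x => (r x ^ 2 * p x - 2 * (r x * s x * p x)) + s x ^ 2 * p x := by
      funext x; ring
    rw [e, integral_add hsub2 hsp, integral_sub hrp (hrsp.const_mul 2),
      integral_const_mul]
  rw [eL, ePz, esplit, eA, eB, eC, eBB]
  ring

/-- **Triangle-inequality step in the proof of Theorem 5.9.**
`ε_ITE ≤ ε_pair + u₀ |∫ r₁² (p₀ − q₀)| + u₁ |∫ r₀² (p₁ − q₁)|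
  + 2 u₁ |∫ r₁ g₀₁ p₁| + 2 u₀ |∫ r₀ g₁₀ p₀|`,
where `q_t(x') = ∫ q_t(x'|x) p_t(x) dx` is the neighbor marginal,
`g₀₁(x) = ∫ (r₀(x') − r₀(x)) q₁(x'|x) dx'` and
`g₁₀(x) = ∫ (r₁(x') − r₁(x)) q₀(x'|x) dx'`.
Here `q₀ x x'` denotes the conditional density `q₀(x'|x)`. -/
theorem ite_pair_triangle_step {d : ℕ}
    (p₀ p₁ r₀ r₁ : Euc d → ℝ) (q₀ q₁ : Euc d → Euc d → ℝ) (u₀ u₁ : ℝ)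
    -- densities
    (hp₀m : Measurable p₀) (hp₁m : Measurable p₁)
    (hp₀0 : ∀ x, 0 ≤ p₀ x) (hp₁0 : ∀ x, 0 ≤ p₁ x)
    (hp₀1 : (∫ x, p₀ x) = 1) (hp₁1 : (∫ x, p₁ x) = 1)
    -- treatment marginals
    (hu₀ : 0 ≤ u₀) (hu₁ : 0 ≤ u₁) (hu : u₀ + u₁ = 1)
    -- residuals
    (hr₀m : Measurable r₀) (hr₁m : Measurable r₁)
    -- neighborhood conditional densities
    (hq₀m : Measurable (fun z : Euc d × Euc d => q₀ z.1 z.2))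
    (hq₁m : Measurable (fun z : Euc d × Euc d => q₁ z.1 z.2))
    (hq₀0 : ∀ x x', 0 ≤ q₀ x x') (hq₁0 : ∀ x x', 0 ≤ q₁ x x')
    (hq₀1 : ∀ x, (∫ x', q₀ x x') = 1) (hq₁1 : ∀ x, (∫ x', q₁ x x') = 1)
    -- all integrals are finite and Fubini applies to the double integrals
    (hITE : Integrable (fun x => (r₁ x - r₀ x) ^ 2 * (u₀ * p₀ x + u₁ * p₁ x)))
    (hpair₀ : Integrable (fun z : Euc d × Euc d =>
      (r₀ z.1 - r₁ z.2) ^ 2 * q₀ z.1 z.2 * p₀ z.1))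
    (hpair₁ : Integrable (fun z : Euc d × Euc d =>
      (r₁ z.1 - r₀ z.2) ^ 2 * q₁ z.1 z.2 * p₁ z.1))
    (hcross₀ : Integrable (fun z : Euc d × Euc d =>
      r₁ z.2 * r₀ z.1 * q₀ z.1 z.2 * p₀ z.1))
    (hcross₁ : Integrable (fun z : Euc d × Euc d =>
      r₁ z.1 * r₀ z.2 * q₁ z.1 z.2 * p₁ z.1))
    (hmarg₀ : Integrable (fun z : Euc d × Euc d =>
      r₁ z.2 ^ 2 * q₀ z.1 z.2 * p₀ z.1))
    (hmarg₁ : Integrable (fun z : Euc d × Euc d =>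
      r₀ z.2 ^ 2 * q₁ z.1 z.2 * p₁ z.1))
    (hr₀p₀ : Integrable (fun x => r₀ x ^ 2 * p₀ x))
    (hr₁p₁ : Integrable (fun x => r₁ x ^ 2 * p₁ x))
    (hr₁p₀ : Integrable (fun x => r₁ x ^ 2 * p₀ x))
    (hr₀p₁ : Integrable (fun x => r₀ x ^ 2 * p₁ x))
    (hr₁Q₀ : Integrable (fun x => r₁ x ^ 2 * (∫ y, q₀ y x * p₀ y)))
    (hr₀Q₁ : Integrable (fun x => r₀ x ^ 2 * (∫ y, q₁ y x * p₁ y)))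
    (hg₀₁ : Integrable (fun x => r₁ x * (∫ x', (r₀ x' - r₀ x) * q₁ x x') * p₁ x))
    (hg₁₀ : Integrable (fun x => r₀ x * (∫ x', (r₁ x' - r₁ x) * q₀ x x') * p₀ x)) :
    (∫ x, (r₁ x - r₀ x) ^ 2 * (u₀ * p₀ x + u₁ * p₁ x)) ≤
      (u₀ * (∫ x, ∫ x', (r₀ x - r₁ x') ^ 2 * q₀ x x' * p₀ x) +
       u₁ * (∫ x, ∫ x', (r₁ x - r₀ x') ^ 2 * q₁ x x' * p₁ x)) +
    u₀ * |∫ x, r₁ x ^ 2 * (p₀ x - ∫ y, q₀ y x * p₀ y)| +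
    u₁ * |∫ x, r₀ x ^ 2 * (p₁ x - ∫ y, q₁ y x * p₁ y)| +
    2 * u₁ * |∫ x, r₁ x * (∫ x', (r₀ x' - r₀ x) * q₁ x x') * p₁ x| +
    2 * u₀ * |∫ x, r₀ x * (∫ x', (r₁ x' - r₁ x) * q₀ x x') * p₀ x| := by
  -- pointwise-dominated integrabilities
  have hrsp₁ : Integrable (fun x => r₁ x * r₀ x * p₁ x) := by
    refine Integrable.mono' ((hr₁p₁.const_mul (1/2)).add (hr₀p₁.const_mul (1/2)))
      (((hr₁m.mul hr₀m).mul hp₁m).aestronglyMeasurable)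
      (Filter.Eventually.of_forall fun x => ?_)
    simp only [Pi.add_apply]
    rw [Real.norm_eq_abs, abs_le]
    constructor <;>
      nlinarith [hp₁0 x, sq_nonneg (r₁ x + r₀ x), sq_nonneg (r₁ x - r₀ x),
        mul_nonneg (sq_nonneg (r₁ x + r₀ x)) (hp₁0 x),
        mul_nonneg (sq_nonneg (r₁ x - r₀ x)) (hp₁0 x)]
  have hrsp₀ : Integrable (fun x => r₀ x * r₁ x * p₀ x) := by
    refine Integrable.mono' ((hr₁p₀.const_mul (1/2)).add (hr₀p₀.const_mul (1/2)))
      (((hr₀m.mul hr₁m).mul hp₀m).aestronglyMeasurable)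
      (Filter.Eventually.of_forall fun x => ?_)
    simp only [Pi.add_apply]
    rw [Real.norm_eq_abs, abs_le]
    constructor <;>
      nlinarith [hp₀0 x, sq_nonneg (r₁ x + r₀ x), sq_nonneg (r₁ x - r₀ x),
        mul_nonneg (sq_nonneg (r₁ x + r₀ x)) (hp₀0 x),
        mul_nonneg (sq_nonneg (r₁ x - r₀ x)) (hp₀0 x)]
  have hf₁ : Integrable (fun x => (r₁ x - r₀ x) ^ 2 * p₁ x) := by
    refine Integrable.mono' ((hr₁p₁.const_mul 2).add (hr₀p₁.const_mul 2))
      ((((hr₁m.sub hr₀m).pow_const 2).mul hp₁m).aestronglyMeasurable)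
      (Filter.Eventually.of_forall fun x => ?_)
    simp only [Pi.add_apply]
    rw [Real.norm_eq_abs, abs_of_nonneg (mul_nonneg (sq_nonneg _) (hp₁0 x))]
    nlinarith [hp₁0 x, mul_nonneg (sq_nonneg (r₁ x + r₀ x)) (hp₁0 x)]
  have hf₀ : Integrable (fun x => (r₀ x - r₁ x) ^ 2 * p₀ x) := by
    refine Integrable.mono' ((hr₁p₀.const_mul 2).add (hr₀p₀.const_mul 2))
      ((((hr₀m.sub hr₁m).pow_const 2).mul hp₀m).aestronglyMeasurable)
      (Filter.Eventually.of_forall fun x => ?_)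
    simp only [Pi.add_apply]
    rw [Real.norm_eq_abs, abs_of_nonneg (mul_nonneg (sq_nonneg _) (hp₀0 x))]
    nlinarith [hp₀0 x, mul_nonneg (sq_nonneg (r₁ x + r₀ x)) (hp₀0 x)]
  have hcross₀' : Integrable (fun z : Euc d × Euc d =>
      r₀ z.1 * r₁ z.2 * q₀ z.1 z.2 * p₀ z.1) := by
    have e : (fun z : Euc d × Euc d => r₀ z.1 * r₁ z.2 * q₀ z.1 z.2 * p₀ z.1)
        = fun z => r₁ z.2 * r₀ z.1 * q₀ z.1 z.2 * p₀ z.1 := by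
      funext z; ring
    rw [e]; exact hcross₀
  have E₁ := key_identity p₁ r₁ r₀ q₁ hq₁1 hpair₁ hcross₁ hmarg₁ hr₁p₁ hr₀p₁
    hrsp₁ hr₀Q₁ hg₀₁
  have E₀ := key_identity p₀ r₀ r₁ q₀ hq₀1 hpair₀ hcross₀' hmarg₀ hr₀p₀ hr₁p₀
    hrsp₀ hr₁Q₀ hg₁₀
  have eL : (∫ x, (r₁ x - r₀ x) ^ 2 * (u₀ * p₀ x + u₁ * p₁ x))
      = u₀ * (∫ x, (r₀ x - r₁ x) ^ 2 * p₀ x)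
        + u₁ * (∫ x, (r₁ x - r₀ x) ^ 2 * p₁ x) := by
    have e : (fun x => (r₁ x - r₀ x) ^ 2 * (u₀ * p₀ x + u₁ * p₁ x))
        = fun x => u₀ * ((r₀ x - r₁ x) ^ 2 * p₀ x)
            + u₁ * ((r₁ x - r₀ x) ^ 2 * p₁ x) := by
      funext x; ring
    rw [e, integral_add (hf₀.const_mul u₀) (hf₁.const_mul u₁), integral_const_mul,
      integral_const_mul]
  rw [eL, E₀, E₁]
  have b1 := mul_le_mul_of_nonneg_left
    (le_abs_self (∫ x, r₁ x ^ 2 * (p₀ x - ∫ y, q₀ y x * p₀ y))) hu₀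
  have b2 := mul_le_mul_of_nonneg_left
    (le_abs_self (∫ x, r₀ x ^ 2 * (p₁ x - ∫ y, q₁ y x * p₁ y))) hu₁
  have b3 := mul_le_mul_of_nonneg_left
    (le_abs_self (∫ x, r₁ x * (∫ x', (r₀ x' - r₀ x) * q₁ x x') * p₁ x)) hu₁
  have b4 := mul_le_mul_of_nonneg_left
    (le_abs_self (∫ x, r₀ x * (∫ x', (r₁ x' - r₁ x) * q₀ x x') * p₀ x)) hu₀
  nlinarith [b1, b2, b3, b4]

end
end

section
/- (Cross-distribution factual error bound, intermediate in Theorem 5.11) Assume there is B > 0 with (1/B)·r_1² ∈ G, and r_1²·p_0 and r_1²·p_1 are integrable. Then ∫ r_1(x)² p(x) dx ≤ ε_F^1 + u_0 · B · IPM_G(p_0, p_1), where p = u_0·p_0 + u_1·p_1 and ε_F^1 = ∫ r_1(x)² p_1(x) dx. -/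
open MeasureTheory

noncomputable section

/-- **Cross-distribution factual error bound (intermediate step in Thm 5.11).**
`∫ r₁(x)² p(x) dx ≤ ε_F^1 + u₀ · B · IPM_G(p₀, p₁)` with `p = u₀ p₀ + u₁ p₁`
and `ε_F^1 = ∫ r₁(x)² p₁(x) dx`. -/
theorem cross_distribution_factual_bound {d : ℕ}
    (p₀ p₁ r₁ : Euc d → ℝ) (u₀ u₁ B : ℝ) (G : Set (Euc d → ℝ))
    -- densities
    (hp₀m : Measurable p₀) (hp₁m : Measurable p₁)
    (hp₀0 : ∀ x, 0 ≤ p₀ x) (hp₁0 : ∀ x, 0 ≤ p₁ x)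
    (hp₀1 : (∫ x, p₀ x) = 1) (hp₁1 : (∫ x, p₁ x) = 1)
    -- treatment marginals
    (hu₀ : 0 ≤ u₀) (hu₁ : 0 ≤ u₁) (hu : u₀ + u₁ = 1)
    -- residual
    (hr₁m : Measurable r₁)
    -- `(1/B)·r₁² ∈ G`
    (hB : 0 < B)
    (hG : (fun x => (1 / B) * r₁ x ^ 2) ∈ G)
    -- integrability
    (hr₁p₀ : Integrable (fun x => r₁ x ^ 2 * p₀ x))
    (hr₁p₁ : Integrable (fun x => r₁ x ^ 2 * p₁ x))
    -- the IPM supremum is finite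
    (hbdd : BddAbove ((fun g => |∫ x, g x * (p₀ x - p₁ x)|) '' G)) :
    (∫ x, r₁ x ^ 2 * (u₀ * p₀ x + u₁ * p₁ x)) ≤
      (∫ x, r₁ x ^ 2 * p₁ x) + u₀ * B * IPM G p₀ p₁ := by
  have hsplit : (∫ x, r₁ x ^ 2 * (u₀ * p₀ x + u₁ * p₁ x))
      = u₀ * (∫ x, r₁ x ^ 2 * p₀ x) + u₁ * (∫ x, r₁ x ^ 2 * p₁ x) := by
    rw [← integral_const_mul, ← integral_const_mul,
      ← integral_add (hr₁p₀.const_mul u₀) (hr₁p₁.const_mul u₁)]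
    congr 1; funext x; ring
  have hdiff : (∫ x, r₁ x ^ 2 * p₀ x) - (∫ x, r₁ x ^ 2 * p₁ x)
      = B * ∫ x, (1 / B) * r₁ x ^ 2 * (p₀ x - p₁ x) := by
    rw [← integral_const_mul, ← integral_sub hr₁p₀ hr₁p₁]
    congr 1; funext x; field_simp
  have hle : (∫ x, (1 / B) * r₁ x ^ 2 * (p₀ x - p₁ x)) ≤ IPM G p₀ p₁ := by
    refine le_trans (le_abs_self _) ?_
    exact le_csSup hbdd ⟨_, hG, rfl⟩
  have h₀ : (∫ x, r₁ x ^ 2 * p₀ x) ≤ (∫ x, r₁ x ^ 2 * p₁ x) + B * IPM G p₀ p₁ := by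
    nlinarith [hdiff, hle]
  calc (∫ x, r₁ x ^ 2 * (u₀ * p₀ x + u₁ * p₁ x))
      = u₀ * (∫ x, r₁ x ^ 2 * p₀ x) + u₁ * (∫ x, r₁ x ^ 2 * p₁ x) := hsplit
    _ ≤ u₀ * ((∫ x, r₁ x ^ 2 * p₁ x) + B * IPM G p₀ p₁)
        + u₁ * (∫ x, r₁ x ^ 2 * p₁ x) := by
        gcongr
    _ = (∫ x, r₁ x ^ 2 * p₁ x) + u₀ * B * IPM G p₀ p₁ := by
        linear_combination (∫ x, r₁ x ^ 2 * p₁ x) * hu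

end
end

section
/- (Consistency corollary of Theorem 5.9, the mechanism of Lemma 5.10) Fix densities p_0, p_1 on ℝ^d, weights u_0, u_1 ≥ 0 with u_0 + u_1 = 1, constants K_0, K_1, B, C > 0, and a family G of measurable functions ℝ^d → ℝ. Suppose for each n ∈ ℕ we have residuals r_0^n, r_1^n and neighbor conditional densities q_t^n(·|x) (t ∈ {0,1}) such that: r_t^n is K_t-Lipschitz; (1/B)·(r_t^n)² ∈ G; ∫ ‖x − x'‖ q_t^n(x'|x) dx' ≤ δ_n for all x and t; ε_F^{t,n} ≤ C for all n and t; and all integrals in Theorem 5.9 are finite. If δ_n → 0, IPM_G(p_t, q_t^n) → 0 for each t ∈ {0,1}, and ε_pair^n → 0 as n → ∞, then ε_ITE^n → 0, where ε_ITE^n, ε_pair^n, ε_F^{t,n}, and the marginals q_t^n are defined from r_0^n, r_1^n, q_t^n as below. -/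
open MeasureTheory Filter Topology

noncomputable section

lemma pairnet_int_of_eq_one {α} [MeasurableSpace α] {μ : Measure α} {f : α → ℝ}
    (h : (∫ x, f x ∂μ) = 1) : Integrable f μ := by
  by_contra hf
  rw [integral_undef hf] at h
  norm_num at h

lemma pairnet_aux_bound {d : ℕ} (f g p : Euc d → ℝ) (q : Euc d → Euc d → ℝ) (K δ : ℝ)
    (hp0 : ∀ x, 0 ≤ p x) (hp1 : (∫ x, p x) = 1)
    (hq0 : ∀ x x', 0 ≤ q x x') (hq1 : ∀ x, (∫ x', q x x') = 1)
    (hnbr : ∀ x, (∫ x', ‖x - x'‖ * q x x') ≤ δ)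
    (hnbrI : ∀ x, Integrable (fun x' => ‖x - x'‖ * q x x'))
    (hK : 0 < K) (hKδ : K * δ ≤ 1/2)
    (hLip : ∀ x y, |g x - g y| ≤ K * ‖x - y‖)
    (hprod : Integrable (fun z : Euc d × Euc d => (f z.1 - g z.2)^2 * q z.1 z.2 * p z.1))
    (hE : Integrable (fun x => (g x - f x)^2 * p x)) :
    (∫ x, (g x - f x)^2 * p x) ≤
      2 * (∫ x, ∫ x', (f x - g x')^2 * q x x' * p x) + 2 * (K * δ) := by
  have hδ0 : 0 ≤ δ := le_trans
    (integral_nonneg fun x' => mul_nonneg (norm_nonneg _) (hq0 0 x')) (hnbr 0)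
  have hpInt : Integrable p := pairnet_int_of_eq_one hp1
  -- a.e. pointwise bound in x
  have hae : ∀ᵐ x : Euc d, (g x - f x)^2 * p x ≤
      (∫ x', (f x - g x')^2 * q x x' * p x) + K * δ * p x
        + K * δ * ((g x - f x)^2 * p x) := by
    filter_upwards [hprod.prod_right_ae] with x hxint
    rcases eq_or_lt_of_le (hp0 x) with hpx | hpx
    · simp only [← hpx, mul_zero]
      simp
    · have hqxI : Integrable (fun x' => q x x') := pairnet_int_of_eq_one (hq1 x)
      have hint2 : Integrable (fun x' => (f x - g x')^2 * q x x') := by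
        have heq : (fun x' => (f x - g x')^2 * q x x')
            = fun x' => ((f x - g x')^2 * q x x' * p x) * (p x)⁻¹ := by
          funext x'
          field_simp
        rw [heq]
        exact hxint.mul_const _
      set c : ℝ := g x - f x with hc
      have hpt : ∀ x', c^2 * q x x' ≤
          (f x - g x')^2 * q x x' + K * (‖x - x'‖ * q x x')
            + (K * c^2) * (‖x - x'‖ * q x x') := by
        intro x'
        have hb := hLip x x'
        have hqn := hq0 x x'
        have hKn : 0 ≤ K * ‖x - x'‖ := mul_nonneg hK.le (norm_nonneg _)
        have hkey : c^2 ≤ (f x - g x')^2 + K * ‖x - x'‖ * (1 + c^2) := by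
          set b : ℝ := g x - g x' with hbb
          have hid : c^2 = (f x - g x')^2 + 2*b*c - b^2 := by
            rw [hc, hbb]; ring
          have hbc : b * c ≤ |b| * |c| :=
            (le_abs_self (b*c)).trans (le_of_eq (abs_mul b c))
          have h2 : 2 * |c| ≤ 1 + c^2 := by
            nlinarith [sq_nonneg (|c| - 1), sq_abs c]
          have h3 : |b| * |c| ≤ (K * ‖x - x'‖) * |c| :=
            mul_le_mul_of_nonneg_right hb (abs_nonneg c)
          have h4 : (K * ‖x - x'‖) * (2 * |c|) ≤ (K * ‖x - x'‖) * (1 + c^2) :=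
            mul_le_mul_of_nonneg_left h2 hKn
          nlinarith [sq_nonneg b]
        nlinarith [mul_le_mul_of_nonneg_right hkey hqn]
      have hIlhs : Integrable (fun x' => c^2 * q x x') := hqxI.const_mul _
      have hi1 : Integrable (fun x' => (f x - g x')^2 * q x x' + K * (‖x - x'‖ * q x x')) :=
        hint2.add ((hnbrI x).const_mul K)
      have hIrhs : Integrable (fun x' => (f x - g x')^2 * q x x'
          + K * (‖x - x'‖ * q x x') + (K * c^2) * (‖x - x'‖ * q x x')) :=
        hi1.add ((hnbrI x).const_mul (K * c^2))
      have hmono := integral_mono hIlhs hIrhs hpt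
      rw [integral_const_mul, hq1 x, mul_one,
        integral_add hi1 ((hnbrI x).const_mul (K * c^2)),
        integral_add hint2 ((hnbrI x).const_mul K),
        integral_const_mul, integral_const_mul] at hmono
      have h1 : c^2 ≤ (∫ x', (f x - g x')^2 * q x x') + K * δ + K * c^2 * δ := by
        have hb1 : K * (∫ x', ‖x - x'‖ * q x x') ≤ K * δ :=
          mul_le_mul_of_nonneg_left (hnbr x) hK.le
        have hb2 : K * c^2 * (∫ x', ‖x - x'‖ * q x x') ≤ K * c^2 * δ :=
          mul_le_mul_of_nonneg_left (hnbr x) (mul_nonneg hK.le (sq_nonneg _))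
        linarith
      have h2 := mul_le_mul_of_nonneg_right h1 (hp0 x)
      have heq2 : (∫ x', (f x - g x')^2 * q x x') * p x
          = ∫ x', (f x - g x')^2 * q x x' * p x := by
        rw [integral_mul_const]
      have h3 : ((∫ x', (f x - g x')^2 * q x x') + K * δ + K * c^2 * δ) * p x
          = (∫ x', (f x - g x')^2 * q x x') * p x + K * δ * p x
            + K * δ * (c^2 * p x) := by ring
      rw [h3, heq2] at h2
      exact h2
  -- integrate the a.e. bound
  have hIinner : Integrable (fun x => ∫ x', (f x - g x')^2 * q x x' * p x) :=
    hprod.integral_prod_left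
  have hj1 : Integrable (fun x => (∫ x', (f x - g x')^2 * q x x' * p x) + K * δ * p x) :=
    hIinner.add (hpInt.const_mul (K * δ))
  have hIrhs : Integrable (fun x => (∫ x', (f x - g x')^2 * q x x' * p x)
      + K * δ * p x + K * δ * ((g x - f x)^2 * p x)) :=
    hj1.add (hE.const_mul (K * δ))
  have hmain := integral_mono_ae hE hIrhs hae
  rw [integral_add hj1 (hE.const_mul (K * δ)),
    integral_add hIinner (hpInt.const_mul (K * δ)),
    integral_const_mul, integral_const_mul, hp1, mul_one] at hmain
  have hE0 : 0 ≤ ∫ x, (g x - f x)^2 * p x :=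
    integral_nonneg fun x => mul_nonneg (sq_nonneg _) (hp0 x)
  have hP0 : 0 ≤ ∫ x, ∫ x', (f x - g x')^2 * q x x' * p x :=
    integral_nonneg fun x => integral_nonneg fun x' =>
      mul_nonneg (mul_nonneg (sq_nonneg _) (hq0 x x')) (hp0 x)
  have h5 : K * δ * (∫ x, (g x - f x)^2 * p x) ≤ (1/2) * (∫ x, (g x - f x)^2 * p x) :=
    mul_le_mul_of_nonneg_right hKδ hE0
  linarith

/-- **Consistency corollary of Theorem 5.9 (mechanism of Lemma 5.10).**
For a sequence of residuals `r_t^n` (uniformly `K_t`-Lipschitz, with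
`(1/B)(r_t^n)² ∈ G` and uniformly bounded factual errors `ε_F^{t,n} ≤ C`) and
neighbor conditional densities `q_t^n(·|x)` with expected neighbor distance at
most `δ_n`: if `δ_n → 0`, `IPM_G(p_t, q_t^n) → 0` for `t ∈ {0,1}`, and
`ε_pair^n → 0`, then `ε_ITE^n → 0`.
Here `q₀ n x x'` denotes the conditional density `q₀^n(x'|x)` and
`fun x => ∫ y, q₀ n y x * p₀ y` its marginal `q₀^n(x')`. -/
theorem pairnet_consistency {d : ℕ}
    (p₀ p₁ : Euc d → ℝ) (u₀ u₁ K₀ K₁ B C : ℝ) (G : Set (Euc d → ℝ))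
    (r₀ r₁ : ℕ → Euc d → ℝ) (q₀ q₁ : ℕ → Euc d → Euc d → ℝ) (δ : ℕ → ℝ)
    -- densities
    (hp₀m : Measurable p₀) (hp₁m : Measurable p₁)
    (hp₀0 : ∀ x, 0 ≤ p₀ x) (hp₁0 : ∀ x, 0 ≤ p₁ x)
    (hp₀1 : (∫ x, p₀ x) = 1) (hp₁1 : (∫ x, p₁ x) = 1)
    -- treatment marginals
    (hu₀ : 0 ≤ u₀) (hu₁ : 0 ≤ u₁) (hu : u₀ + u₁ = 1)
    -- constants
    (hK₀ : 0 < K₀) (hK₁ : 0 < K₁) (hB : 0 < B) (hC : 0 < C)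
    -- residuals: measurable, Lipschitz, in `B·G`
    (hr₀m : ∀ n, Measurable (r₀ n)) (hr₁m : ∀ n, Measurable (r₁ n))
    (hLip₀ : ∀ n x y, |r₀ n x - r₀ n y| ≤ K₀ * ‖x - y‖)
    (hLip₁ : ∀ n x y, |r₁ n x - r₁ n y| ≤ K₁ * ‖x - y‖)
    (hG₀ : ∀ n, (fun x => (1 / B) * r₀ n x ^ 2) ∈ G)
    (hG₁ : ∀ n, (fun x => (1 / B) * r₁ n x ^ 2) ∈ G)
    -- neighborhood conditional densities
    (hq₀m : ∀ n, Measurable (fun z : Euc d × Euc d => q₀ n z.1 z.2))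
    (hq₁m : ∀ n, Measurable (fun z : Euc d × Euc d => q₁ n z.1 z.2))
    (hq₀0 : ∀ n x x', 0 ≤ q₀ n x x') (hq₁0 : ∀ n x x', 0 ≤ q₁ n x x')
    (hq₀1 : ∀ n x, (∫ x', q₀ n x x') = 1) (hq₁1 : ∀ n x, (∫ x', q₁ n x x') = 1)
    -- expected neighbor distance at most `δ n`
    (hnbr₀ : ∀ n x, (∫ x', ‖x - x'‖ * q₀ n x x') ≤ δ n)
    (hnbr₁ : ∀ n x, (∫ x', ‖x - x'‖ * q₁ n x x') ≤ δ n)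
    -- uniformly bounded factual errors
    (hF₀ : ∀ n, (∫ x, r₀ n x ^ 2 * p₀ x) ≤ C)
    (hF₁ : ∀ n, (∫ x, r₁ n x ^ 2 * p₁ x) ≤ C)
    -- all integrals appearing in Theorem 5.9 are finite (Fubini applies)
    (hfin : ∀ n,
      Integrable (fun x => (r₁ n x - r₀ n x) ^ 2 * (u₀ * p₀ x + u₁ * p₁ x)) ∧
      Integrable (fun z : Euc d × Euc d =>
        (r₀ n z.1 - r₁ n z.2) ^ 2 * q₀ n z.1 z.2 * p₀ z.1) ∧
      Integrable (fun z : Euc d × Euc d =>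
        (r₁ n z.1 - r₀ n z.2) ^ 2 * q₁ n z.1 z.2 * p₁ z.1) ∧
      Integrable (fun z : Euc d × Euc d =>
        r₁ n z.2 * r₀ n z.1 * q₀ n z.1 z.2 * p₀ z.1) ∧
      Integrable (fun z : Euc d × Euc d =>
        r₁ n z.1 * r₀ n z.2 * q₁ n z.1 z.2 * p₁ z.1) ∧
      Integrable (fun z : Euc d × Euc d =>
        r₁ n z.2 ^ 2 * q₀ n z.1 z.2 * p₀ z.1) ∧
      Integrable (fun z : Euc d × Euc d =>
        r₀ n z.2 ^ 2 * q₁ n z.1 z.2 * p₁ z.1) ∧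
      Integrable (fun x => r₀ n x ^ 2 * p₀ x) ∧
      Integrable (fun x => r₁ n x ^ 2 * p₁ x) ∧
      Integrable (fun x => r₁ n x ^ 2 * p₀ x) ∧
      Integrable (fun x => r₀ n x ^ 2 * p₁ x) ∧
      Integrable (fun x => r₁ n x ^ 2 * (∫ y, q₀ n y x * p₀ y)) ∧
      Integrable (fun x => r₀ n x ^ 2 * (∫ y, q₁ n y x * p₁ y)) ∧
      Integrable
        (fun x => r₁ n x * (∫ x', (r₀ n x' - r₀ n x) * q₁ n x x') * p₁ x) ∧
      Integrable
        (fun x => r₀ n x * (∫ x', (r₁ n x' - r₁ n x) * q₀ n x x') * p₀ x) ∧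
      (∀ x, Integrable (fun x' => (r₁ n x' - r₁ n x) * q₀ n x x')) ∧
      (∀ x, Integrable (fun x' => (r₀ n x' - r₀ n x) * q₁ n x x')) ∧
      (∀ x, Integrable (fun x' => ‖x - x'‖ * q₀ n x x')) ∧
      (∀ x, Integrable (fun x' => ‖x - x'‖ * q₁ n x x')))
    -- limits
    (hδ : Tendsto δ atTop (𝓝 0))
    (hIPM₀ : Tendsto
      (fun n => IPM G p₀ (fun x => ∫ y, q₀ n y x * p₀ y)) atTop (𝓝 0))
    (hIPM₁ : Tendsto
      (fun n => IPM G p₁ (fun x => ∫ y, q₁ n y x * p₁ y)) atTop (𝓝 0))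
    (hpair : Tendsto (fun n =>
      u₀ * (∫ x, ∫ x', (r₀ n x - r₁ n x') ^ 2 * q₀ n x x' * p₀ x) +
      u₁ * (∫ x, ∫ x', (r₁ n x - r₀ n x') ^ 2 * q₁ n x x' * p₁ x))
      atTop (𝓝 0)) :
    Tendsto (fun n => ∫ x, (r₁ n x - r₀ n x) ^ 2 * (u₀ * p₀ x + u₁ * p₁ x))
      atTop (𝓝 0) := by
  -- The IPM hypotheses are not needed: pair loss + Lipschitz + vanishing
  -- neighbor distance already force the ITE risk to vanish.
  have hmax : (0:ℝ) < max K₀ K₁ := lt_of_lt_of_le hK₀ (le_max_left _ _)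
  apply squeeze_zero' (t₀ := atTop)
  · exact Eventually.of_forall fun n => integral_nonneg fun x =>
      mul_nonneg (sq_nonneg _)
        (add_nonneg (mul_nonneg hu₀ (hp₀0 x)) (mul_nonneg hu₁ (hp₁0 x)))
  · show ∀ᶠ n in atTop, _ ≤ (fun n =>
      2 * (u₀ * (∫ x, ∫ x', (r₀ n x - r₁ n x') ^ 2 * q₀ n x x' * p₀ x) +
        u₁ * (∫ x, ∫ x', (r₁ n x - r₀ n x') ^ 2 * q₁ n x x' * p₁ x)) +
      2 * (K₀ + K₁) * δ n) n
    have hev : ∀ᶠ n in atTop, δ n ≤ (2 * max K₀ K₁)⁻¹ :=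
      hδ.eventually (eventually_le_nhds (by positivity))
    filter_upwards [hev] with n hn
    obtain ⟨hI, hprod₀, hprod₁, -, -, -, -, -, -, -, -, -, -, -, -, -, -, hnI₀, hnI₁⟩ :=
      hfin n
    have hδn0 : 0 ≤ δ n := le_trans
      (integral_nonneg fun x' => mul_nonneg (norm_nonneg _) (hq₀0 n 0 x')) (hnbr₀ n 0)
    have hK₀δ : K₀ * δ n ≤ 1/2 := by
      calc K₀ * δ n ≤ max K₀ K₁ * δ n :=
            mul_le_mul_of_nonneg_right (le_max_left _ _) hδn0
        _ ≤ max K₀ K₁ * (2 * max K₀ K₁)⁻¹ :=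
            mul_le_mul_of_nonneg_left hn hmax.le
        _ = 1/2 := by field_simp
    have hK₁δ : K₁ * δ n ≤ 1/2 := by
      calc K₁ * δ n ≤ max K₀ K₁ * δ n :=
            mul_le_mul_of_nonneg_right (le_max_right _ _) hδn0
        _ ≤ max K₀ K₁ * (2 * max K₀ K₁)⁻¹ :=
            mul_le_mul_of_nonneg_left hn hmax.le
        _ = 1/2 := by field_simp
    have hmeas₀ : Measurable (fun x => (r₁ n x - r₀ n x) ^ 2 * p₀ x) :=
      (((hr₁m n).sub (hr₀m n)).pow measurable_const).mul hp₀m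
    have hmeas₁ : Measurable (fun x => (r₁ n x - r₀ n x) ^ 2 * p₁ x) :=
      (((hr₁m n).sub (hr₀m n)).pow measurable_const).mul hp₁m
    have hIA : Integrable (fun x => u₀ * ((r₁ n x - r₀ n x) ^ 2 * p₀ x)) := by
      refine hI.mono' ((measurable_const.mul hmeas₀).aestronglyMeasurable)
        (Eventually.of_forall fun x => ?_)
      rw [Real.norm_eq_abs, abs_of_nonneg
        (mul_nonneg hu₀ (mul_nonneg (sq_nonneg _) (hp₀0 x)))]
      nlinarith [hp₁0 x, sq_nonneg (r₁ n x - r₀ n x),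
        mul_nonneg hu₁ (hp₁0 x), sq_nonneg (r₁ n x - r₀ n x)]
    have hIB : Integrable (fun x => u₁ * ((r₁ n x - r₀ n x) ^ 2 * p₁ x)) := by
      refine hI.mono' ((measurable_const.mul hmeas₁).aestronglyMeasurable)
        (Eventually.of_forall fun x => ?_)
      rw [Real.norm_eq_abs, abs_of_nonneg
        (mul_nonneg hu₁ (mul_nonneg (sq_nonneg _) (hp₁0 x)))]
      nlinarith [hp₀0 x, mul_nonneg hu₀ (hp₀0 x), sq_nonneg (r₁ n x - r₀ n x)]
    have hsplit : (fun x => (r₁ n x - r₀ n x) ^ 2 * (u₀ * p₀ x + u₁ * p₁ x))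
        = fun x => u₀ * ((r₁ n x - r₀ n x) ^ 2 * p₀ x)
          + u₁ * ((r₁ n x - r₀ n x) ^ 2 * p₁ x) := by
      funext x; ring
    rw [hsplit, integral_add hIA hIB, integral_const_mul, integral_const_mul]
    have hP₀0 : 0 ≤ ∫ x, ∫ x', (r₀ n x - r₁ n x') ^ 2 * q₀ n x x' * p₀ x :=
      integral_nonneg fun x => integral_nonneg fun x' =>
        mul_nonneg (mul_nonneg (sq_nonneg _) (hq₀0 n x x')) (hp₀0 x)
    have hP₁0 : 0 ≤ ∫ x, ∫ x', (r₁ n x - r₀ n x') ^ 2 * q₁ n x x' * p₁ x :=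
      integral_nonneg fun x => integral_nonneg fun x' =>
        mul_nonneg (mul_nonneg (sq_nonneg _) (hq₁0 n x x')) (hp₁0 x)
    have h₀ : u₀ * (∫ x, (r₁ n x - r₀ n x) ^ 2 * p₀ x)
        ≤ u₀ * (2 * (∫ x, ∫ x', (r₀ n x - r₁ n x') ^ 2 * q₀ n x x' * p₀ x)
          + 2 * (K₁ * δ n)) := by
      rcases eq_or_lt_of_le hu₀ with h0 | h0
      · rw [← h0]; simp
      · refine mul_le_mul_of_nonneg_left ?_ hu₀
        have hE₀int : Integrable (fun x => (r₁ n x - r₀ n x) ^ 2 * p₀ x) := by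
          have h := hIA.const_mul u₀⁻¹
          have heq : (fun x => (r₁ n x - r₀ n x) ^ 2 * p₀ x)
              = fun x => u₀⁻¹ * (u₀ * ((r₁ n x - r₀ n x) ^ 2 * p₀ x)) := by
            funext x; field_simp
          rw [heq]; exact h
        exact pairnet_aux_bound (r₀ n) (r₁ n) p₀ (q₀ n) K₁ (δ n)
          hp₀0 hp₀1 (hq₀0 n) (hq₀1 n) (hnbr₀ n) hnI₀ hK₁ hK₁δ (hLip₁ n)
          hprod₀ hE₀int
    have h₁ : u₁ * (∫ x, (r₁ n x - r₀ n x) ^ 2 * p₁ x)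
        ≤ u₁ * (2 * (∫ x, ∫ x', (r₁ n x - r₀ n x') ^ 2 * q₁ n x x' * p₁ x)
          + 2 * (K₀ * δ n)) := by
      rcases eq_or_lt_of_le hu₁ with h1 | h1
      · rw [← h1]; simp
      · refine mul_le_mul_of_nonneg_left ?_ hu₁
        have hflip : (fun x => (r₁ n x - r₀ n x) ^ 2 * p₁ x)
            = fun x => (r₀ n x - r₁ n x) ^ 2 * p₁ x := by
          funext x; ring
        rw [hflip]
        have hE₁int : Integrable (fun x => (r₀ n x - r₁ n x) ^ 2 * p₁ x) := by
          have h := hIB.const_mul u₁⁻¹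
          have heq : (fun x => (r₀ n x - r₁ n x) ^ 2 * p₁ x)
              = fun x => u₁⁻¹ * (u₁ * ((r₁ n x - r₀ n x) ^ 2 * p₁ x)) := by
            funext x; rw [show (r₀ n x - r₁ n x) ^ 2 = (r₁ n x - r₀ n x) ^ 2 by ring]
            field_simp
          rw [heq]; exact h
        exact pairnet_aux_bound (r₁ n) (r₀ n) p₁ (q₁ n) K₀ (δ n)
          hp₁0 hp₁1 (hq₁0 n) (hq₁1 n) (hnbr₁ n) hnI₁ hK₀ hK₀δ (hLip₀ n)
          hprod₁ hE₁int
    have hu₀1 : u₀ ≤ 1 := by linarith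
    have hu₁1 : u₁ ≤ 1 := by linarith
    have hx0 : 0 ≤ u₀ * (K₀ * δ n) := mul_nonneg hu₀ (mul_nonneg hK₀.le hδn0)
    have hx1 : 0 ≤ u₁ * (K₁ * δ n) := mul_nonneg hu₁ (mul_nonneg hK₁.le hδn0)
    nlinarith [h₀, h₁, hP₀0, hP₁0, hδn0, hx0, hx1,
      mul_le_mul_of_nonneg_right hu₀1 (mul_nonneg hK₁.le hδn0),
      mul_le_mul_of_nonneg_right hu₁1 (mul_nonneg hK₀.le hδn0)]
  · have := (hpair.const_mul (2:ℝ)).add (hδ.const_mul (2 * (K₀ + K₁)))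
    simpa using this


end
end
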